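/- arXiv:1904.07010 — 4 statements merged into one kernel-verified Lean document; each statement's English description precedes it below -/
import Mathlib

section
/- Let f : (0,∞) → ℂ be measurable with ∫₀^∞ |f(σ)|² dσ < ∞. Then ∫₀^∞ (1/σ) | ∫₀^σ f(σ−τ) f(τ) dτ |² dσ ≤ ( ∫₀^∞ |f(σ)|² dσ )². -/
open MeasureTheory Complex Real Set
open scoped ENNReal NNReal

/-- Sharp convolution inequality on the half-line:
`∫₀^∞ (1/σ) |∫₀^σ f(σ−τ)f(τ)dτ|² dσ ≤ (∫₀^∞ |f|²)²`. -/
theorem convolution_inequality (f : ℝ → ℂ) (hf : Measurable f)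
    (hL2 : ∫⁻ σ in Set.Ioi (0:ℝ), (‖f σ‖₊ : ℝ≥0∞)^2 < ⊤) :
    ∫⁻ σ in Set.Ioi (0:ℝ),
        ENNReal.ofReal (1/σ) * (‖∫ τ in (0:ℝ)..σ, f (σ - τ) * f τ‖₊ : ℝ≥0∞)^2
      ≤ (∫⁻ σ in Set.Ioi (0:ℝ), (‖f σ‖₊ : ℝ≥0∞)^2)^2 := by
  set g : ℝ → ℝ≥0∞ := fun x => (‖f x‖₊ : ℝ≥0∞)^2 with hg
  have hgm : Measurable g := (hf.enorm).pow_const 2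
  set I : ℝ≥0∞ := ∫⁻ σ in Set.Ioi (0:ℝ), g σ with hI
  -- Step A: pointwise Cauchy-Schwarz bound
  have hpow : ∀ x : ℝ≥0∞, x ^ (2:ℝ) = x ^ (2:ℕ) := fun x => by
    rw [← ENNReal.rpow_natCast]; norm_num
  have stepA : ∀ σ ∈ Set.Ioi (0:ℝ),
      ENNReal.ofReal (1/σ) * (‖∫ τ in (0:ℝ)..σ, f (σ - τ) * f τ‖₊ : ℝ≥0∞)^2
        ≤ ∫⁻ τ in Set.Ioo (0:ℝ) σ, g (σ - τ) * g τ := by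
    intro σ hσ
    rw [Set.mem_Ioi] at hσ
    set h : ℝ → ℂ := fun τ => f (σ - τ) * f τ with hh
    have hhm : Measurable h := (hf.comp (measurable_const.sub measurable_id)).mul hf
    -- norm of integral ≤ lintegral of norms over Ioo
    have h1 : (‖∫ τ in (0:ℝ)..σ, h τ‖₊ : ℝ≥0∞)
        ≤ ∫⁻ τ in Set.Ioo (0:ℝ) σ, (‖h τ‖₊ : ℝ≥0∞) := by
      rw [intervalIntegral.integral_of_le hσ.le]
      refine le_trans (enorm_integral_le_lintegral_enorm _) ?_
      rw [setLIntegral_congr (Ioo_ae_eq_Ioc (a := (0:ℝ)) (b := σ)).symm]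
      exact le_rfl
    -- Cauchy-Schwarz on Ioo 0 σ
    have h2 : ∫⁻ τ in Set.Ioo (0:ℝ) σ, (‖h τ‖₊ : ℝ≥0∞)
        ≤ (ENNReal.ofReal σ) ^ ((1:ℝ)/2) *
          (∫⁻ τ in Set.Ioo (0:ℝ) σ, (‖h τ‖₊ : ℝ≥0∞)^(2:ℝ)) ^ ((1:ℝ)/2) := by
      have hpq : Real.HolderConjugate 2 2 := Real.HolderConjugate.two_two
      have := ENNReal.lintegral_mul_le_Lp_mul_Lq
        (volume.restrict (Set.Ioo (0:ℝ) σ)) hpq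
        (f := fun _ => (1:ℝ≥0∞)) (g := fun τ => (‖h τ‖₊ : ℝ≥0∞))
        aemeasurable_const hhm.enorm.aemeasurable
      simpa [Real.volume_Ioo, sub_zero, ENNReal.one_rpow] using this
    have h3 : (‖∫ τ in (0:ℝ)..σ, h τ‖₊ : ℝ≥0∞)^2
        ≤ ENNReal.ofReal σ * ∫⁻ τ in Set.Ioo (0:ℝ) σ, (‖h τ‖₊ : ℝ≥0∞)^(2:ℝ) := by
      calc (‖∫ τ in (0:ℝ)..σ, h τ‖₊ : ℝ≥0∞)^2
          ≤ ((ENNReal.ofReal σ) ^ ((1:ℝ)/2) *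
            (∫⁻ τ in Set.Ioo (0:ℝ) σ, (‖h τ‖₊ : ℝ≥0∞)^(2:ℝ)) ^ ((1:ℝ)/2))^2 :=
            pow_le_pow_left' (h1.trans h2) 2
        _ = ENNReal.ofReal σ * ∫⁻ τ in Set.Ioo (0:ℝ) σ, (‖h τ‖₊ : ℝ≥0∞)^(2:ℝ) := by
            rw [mul_pow, ← ENNReal.rpow_natCast (_ ^ ((1:ℝ)/2)) 2,
              ← ENNReal.rpow_natCast (_ ^ ((1:ℝ)/2)) 2,
              ← ENNReal.rpow_mul, ← ENNReal.rpow_mul]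
            norm_num
    have hσinv : ENNReal.ofReal (1/σ) * ENNReal.ofReal σ = 1 := by
      rw [← ENNReal.ofReal_mul (by positivity)]
      rw [one_div, inv_mul_cancel₀ (ne_of_gt hσ)]
      simp
    calc ENNReal.ofReal (1/σ) * (‖∫ τ in (0:ℝ)..σ, h τ‖₊ : ℝ≥0∞)^2
        ≤ ENNReal.ofReal (1/σ) *
          (ENNReal.ofReal σ * ∫⁻ τ in Set.Ioo (0:ℝ) σ, (‖h τ‖₊ : ℝ≥0∞)^(2:ℝ)) :=
          mul_le_mul_right h3 _
      _ = ∫⁻ τ in Set.Ioo (0:ℝ) σ, (‖h τ‖₊ : ℝ≥0∞)^(2:ℝ) := by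
          rw [← mul_assoc, hσinv, one_mul]
      _ = ∫⁻ τ in Set.Ioo (0:ℝ) σ, g (σ - τ) * g τ := by
          refine lintegral_congr fun τ => ?_
          rw [hh, hg]
          simp only [nnnorm_mul, ENNReal.coe_mul]
          rw [hpow, mul_pow]
    -- Step B will finish
  -- Step B: Fubini computation
  have stepB : ∫⁻ σ in Set.Ioi (0:ℝ), ∫⁻ τ in Set.Ioo (0:ℝ) σ, g (σ - τ) * g τ
      = I * I := by
    set S : Set (ℝ × ℝ) := {p : ℝ × ℝ | 0 < p.2 ∧ p.2 < p.1} with hS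
    have hSm : MeasurableSet S :=
      (measurableSet_lt measurable_const measurable_snd).inter
        (measurableSet_lt measurable_snd measurable_fst)
    set F : ℝ × ℝ → ℝ≥0∞ := S.indicator (fun p => g (p.1 - p.2) * g p.2) with hF
    have hFm : Measurable F :=
      ((hgm.comp (measurable_fst.sub measurable_snd)).mul
        (hgm.comp measurable_snd)).indicator hSm
    have key1 : ∀ σ : ℝ, ∫⁻ τ in Set.Ioo (0:ℝ) σ, g (σ - τ) * g τ
        = ∫⁻ τ, F (σ, τ) := by
      intro σ
      rw [← lintegral_indicator measurableSet_Ioo]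
      refine lintegral_congr fun τ => ?_
      by_cases hτ : τ ∈ Set.Ioo (0:ℝ) σ
      · rw [Set.indicator_of_mem hτ, hF, Set.indicator_of_mem]
        exact ⟨hτ.1, hτ.2⟩
      · rw [Set.indicator_of_notMem hτ, hF, Set.indicator_of_notMem]
        intro hc
        exact hτ ⟨hc.1, hc.2⟩
    have swap : ∫⁻ σ in Set.Ioi (0:ℝ), ∫⁻ τ, F (σ, τ)
        = ∫⁻ τ, ∫⁻ σ in Set.Ioi (0:ℝ), F (σ, τ) := by
      exact lintegral_lintegral_swap
        (hFm.aemeasurable.comp_measurable (measurable_fst.prodMk measurable_snd))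
    have trans_eq : ∀ τ : ℝ, 0 < τ →
        (∫⁻ σ in Set.Ioi τ, g (σ - τ)) = I := by
      intro τ hτ
      rw [hI, ← lintegral_indicator measurableSet_Ioi,
        ← lintegral_indicator measurableSet_Ioi]
      rw [← lintegral_add_right_eq_self
        (fun σ => (Set.Ioi τ).indicator (fun σ => g (σ - τ)) σ) τ]
      refine lintegral_congr fun x => ?_
      by_cases hx : x ∈ Set.Ioi (0:ℝ)
      · rw [Set.indicator_of_mem, Set.indicator_of_mem hx, add_sub_cancel_right]
        simpa using hx
      · rw [Set.indicator_of_notMem, Set.indicator_of_notMem hx]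
        simp only [Set.mem_Ioi, not_lt] at hx ⊢
        linarith
    have inner : ∀ τ : ℝ, (∫⁻ σ in Set.Ioi (0:ℝ), F (σ, τ))
        = (Set.Ioi (0:ℝ)).indicator (fun τ => I * g τ) τ := by
      intro τ
      by_cases hτ : 0 < τ
      · rw [Set.indicator_of_mem (Set.mem_Ioi.2 hτ)]
        have hrestrict : ∀ σ : ℝ, F (σ, τ)
            = (Set.Ioi τ).indicator (fun σ => g (σ - τ) * g τ) σ := by
          intro σ
          by_cases hσ : τ < σ
          · rw [hF, Set.indicator_of_mem (Set.mem_Ioi.2 hσ), Set.indicator_of_mem]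
            exact ⟨hτ, hσ⟩
          · rw [hF, Set.indicator_of_notMem (fun hc => hσ hc.2),
              Set.indicator_of_notMem (by simpa using hσ)]
        calc ∫⁻ σ in Set.Ioi (0:ℝ), F (σ, τ)
            = ∫⁻ σ, (Set.Ioi τ).indicator (fun σ => g (σ - τ) * g τ) σ := by
              rw [← lintegral_indicator measurableSet_Ioi]
              refine lintegral_congr fun σ => ?_
              by_cases hσ : σ ∈ Set.Ioi (0:ℝ)
              · rw [Set.indicator_of_mem hσ, hrestrict]
              · rw [Set.indicator_of_notMem hσ,
                  Set.indicator_of_notMem (s := Set.Ioi τ) (a := σ) (by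
                    simp only [Set.mem_Ioi, not_lt] at hσ ⊢
                    linarith)]
          _ = ∫⁻ σ in Set.Ioi τ, g (σ - τ) * g τ := by
              rw [lintegral_indicator measurableSet_Ioi]
          _ = (∫⁻ σ in Set.Ioi τ, g (σ - τ)) * g τ :=
              lintegral_mul_const _ (hgm.comp (measurable_id.sub measurable_const))
          _ = I * g τ := by rw [trans_eq τ hτ]
      · rw [Set.indicator_of_notMem (by simpa using hτ)]
        have : ∀ σ : ℝ, F (σ, τ) = 0 := by
          intro σ
          rw [hF, Set.indicator_of_notMem]
          intro hc; exact hτ hc.1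
        simp [this]
    calc ∫⁻ σ in Set.Ioi (0:ℝ), ∫⁻ τ in Set.Ioo (0:ℝ) σ, g (σ - τ) * g τ
        = ∫⁻ σ in Set.Ioi (0:ℝ), ∫⁻ τ, F (σ, τ) := by
          exact lintegral_congr fun σ => key1 σ
      _ = ∫⁻ τ, ∫⁻ σ in Set.Ioi (0:ℝ), F (σ, τ) := swap
      _ = ∫⁻ τ, (Set.Ioi (0:ℝ)).indicator (fun τ => I * g τ) τ :=
          lintegral_congr inner
      _ = ∫⁻ τ in Set.Ioi (0:ℝ), I * g τ := by
          rw [lintegral_indicator measurableSet_Ioi]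
      _ = I * I := by rw [lintegral_const_mul _ hgm]
  calc ∫⁻ σ in Set.Ioi (0:ℝ),
        ENNReal.ofReal (1/σ) * (‖∫ τ in (0:ℝ)..σ, f (σ - τ) * f τ‖₊ : ℝ≥0∞)^2
      ≤ ∫⁻ σ in Set.Ioi (0:ℝ), ∫⁻ τ in Set.Ioo (0:ℝ) σ, g (σ - τ) * g τ :=
        setLIntegral_mono' measurableSet_Ioi stepA
    _ = I * I := stepB
    _ = (∫⁻ σ in Set.Ioi (0:ℝ), (‖f σ‖₊ : ℝ≥0∞)^2)^2 := by rw [sq]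
end

section
/- Let Q₊ : ℝ³ → ℂ be defined by Q₊(x,y,s) = i√2 / (s + i(x²+y²) + i). Then ∫_{ℝ³} |Q₊(x,y,s)|⁴ dx dy ds = π², i.e. ∫_{ℝ³} 4/(((1+x²+y²)² + s²)²) dx dy ds = π², and E(Q₊) = ∫_{ℝ³} [ (1/4)(|∂_x Q₊|² + |∂_y Q₊|²) + (x²+y²)|∂_s Q₊|² ] dx dy ds = π². -/
open MeasureTheory Complex Real Set
open scoped ENNReal NNReal

/-- Partial derivative in the first (x) variable. -/
noncomputable def pdx (u : ℝ × ℝ × ℝ → ℂ) (p : ℝ × ℝ × ℝ) : ℂ := fderiv ℝ u p (1, 0, 0)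
/-- Partial derivative in the second (y) variable. -/
noncomputable def pdy (u : ℝ × ℝ × ℝ → ℂ) (p : ℝ × ℝ × ℝ) : ℂ := fderiv ℝ u p (0, 1, 0)
/-- Partial derivative in the third (s) variable. -/
noncomputable def pds (u : ℝ × ℝ × ℝ → ℂ) (p : ℝ × ℝ × ℝ) : ℂ := fderiv ℝ u p (0, 0, 1)

/-- Heisenberg homogeneous energy form
`E(u) = ∫ (1/4)(|∂ₓu|² + |∂_yu|²) + (x²+y²)|∂ₛu|²`. -/
noncomputable def energy (u : ℝ × ℝ × ℝ → ℂ) : ℝ :=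
  ∫ p : ℝ × ℝ × ℝ,
    ((1/4) * (‖pdx u p‖^2 + ‖pdy u p‖^2) + (p.1^2 + p.2.1^2) * ‖pds u p‖^2)

/-- The ground state `Q₊(x,y,s) = i√2 / (s + i(x²+y²) + i)`. -/
noncomputable def Qplus (p : ℝ × ℝ × ℝ) : ℂ :=
  Complex.I * (Real.sqrt 2 : ℝ) /
    ((p.2.2 : ℝ) + Complex.I * ((p.1 : ℝ)^2 + (p.2.1 : ℝ)^2) + Complex.I)

open Filter Topology


/-- helper: s/(C·g s) → 0 when g eventually ≥ s². -/
lemma tendsto_lin_div (C : ℝ) (hC : 0 < C) (g : ℝ → ℝ)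
    (hg : ∀ᶠ s in atTop, s^2 ≤ g s) (hgpos : ∀ᶠ s in atTop, 0 < g s) :
    Tendsto (fun s : ℝ => s / (C * g s)) atTop (𝓝 0) := by
  have htend : Tendsto (fun s : ℝ => (C*s)⁻¹) atTop (𝓝 0) :=
    tendsto_inv_atTop_zero.comp (Tendsto.const_mul_atTop hC tendsto_id)
  apply squeeze_zero_norm' ?_ htend
  · filter_upwards [hg, hgpos, eventually_ge_atTop 1] with s h1 h2 h3
    have hs : (0:ℝ) < s := by linarith
    rw [Real.norm_eq_abs, abs_div, _root_.abs_of_nonneg hs.le, _root_.abs_of_pos (by positivity)]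
    rw [div_le_iff₀ (by positivity), inv_mul_eq_div, le_div_iff₀ (by positivity)]
    nlinarith

lemma tendsto_arctan_div (a : ℝ) (ha : 0 < a) (D : ℝ) :
    Tendsto (fun s : ℝ => Real.arctan (s/a) / D) atTop (𝓝 ((π/2)/D)) :=
  ((Real.tendsto_arctan_atTop.mono_right nhdsWithin_le_nhds).comp
    (Tendsto.atTop_div_const ha tendsto_id)).div_const D

/-- `∫ 1/(a²+s²)² = π/(2a³)` plus integrability, for `a ≥ 1`. -/
lemma integral_pow2 (a : ℝ) (ha : 1 ≤ a) :
    Integrable (fun s : ℝ => ((a^2+s^2)^2)⁻¹) ∧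
    ∫ s : ℝ, ((a^2+s^2)^2)⁻¹ = π/(2*a^3) := by
  have ha0 : (0:ℝ) < a := lt_of_lt_of_le one_pos ha
  have hcont : Continuous (fun s : ℝ => ((a^2+s^2)^2)⁻¹) := by
    apply Continuous.inv₀ (by fun_prop)
    intro s; positivity
  have hint : Integrable (fun s : ℝ => ((a^2+s^2)^2)⁻¹) := by
    apply integrable_inv_one_add_sq.mono hcont.aestronglyMeasurable
    filter_upwards with s
    rw [norm_inv, norm_inv, Real.norm_eq_abs, Real.norm_eq_abs,
      _root_.abs_of_pos (by positivity), _root_.abs_of_pos (by positivity)]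
    apply inv_anti₀ (by positivity)
    have ha2 : 1 ≤ a^2 := by nlinarith
    nlinarith [sq_nonneg (s^2), mul_le_mul_of_nonneg_right ha2 (sq_nonneg s)]
  refine ⟨hint, ?_⟩
  set F : ℝ → ℝ := fun s => s / (2*a^2*(a^2+s^2)) + Real.arctan (s/a) / (2*a^3) with hF
  have hderiv : ∀ s : ℝ, HasDerivAt F (((a^2+s^2)^2)⁻¹) s := by
    intro s
    have hd : HasDerivAt (fun s : ℝ => 2*a^2*(a^2+s^2)) (2*a^2*(2*s)) s := by
      have : HasDerivAt (fun s : ℝ => a^2+s^2) (2*s) s := by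
        simpa using (hasDerivAt_pow 2 s).const_add (a^2)
      simpa using this.const_mul (2*a^2)
    have h1 : HasDerivAt (fun s : ℝ => s / (2*a^2*(a^2+s^2)))
        ((1*(2*a^2*(a^2+s^2)) - s*(2*a^2*(2*s)))/(2*a^2*(a^2+s^2))^2) s :=
      (hasDerivAt_id s).div hd (by positivity)
    have h2 : HasDerivAt (fun s : ℝ => Real.arctan (s/a) / (2*a^3))
        ((1/(1+(s/a)^2) * (1/a)) / (2*a^3)) s := by
      have := (Real.hasDerivAt_arctan (s/a)).comp s ((hasDerivAt_id s).div_const a)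
      simpa using this.div_const (2*a^3)
    have := h1.add h2
    refine this.congr_deriv ?_
    have h3 : (0:ℝ) < a^2+s^2 := by positivity
    field_simp
    ring
  have htop : Tendsto F atTop (𝓝 (π/(4*a^3))) := by
    have t1 : Tendsto (fun s : ℝ => s / (2*a^2*(a^2+s^2))) atTop (𝓝 0) := by
      apply tendsto_lin_div _ (by positivity)
      · filter_upwards with s; nlinarith [sq_nonneg a]
      · filter_upwards with s; positivity
    have t2 := tendsto_arctan_div a ha0 (2*a^3)
    have := t1.add t2
    rw [zero_add] at this
    convert this using 2
    ring
  have hIoi : ∫ s in Ioi (0:ℝ), ((a^2+s^2)^2)⁻¹ = π/(4*a^3) - F 0 :=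
    integral_Ioi_of_hasDerivAt_of_tendsto' (fun s _ => hderiv s) hint.integrableOn htop
  have hF0 : F 0 = 0 := by simp [hF]
  have heven : (fun s : ℝ => ((a^2+s^2)^2)⁻¹) = fun s : ℝ => ((a^2+|s|^2)^2)⁻¹ := by
    funext s; rw [_root_.sq_abs]
  calc ∫ s : ℝ, ((a^2+s^2)^2)⁻¹ = ∫ s : ℝ, ((a^2+|s|^2)^2)⁻¹ := by rw [heven]
    _ = 2 * ∫ s in Ioi (0:ℝ), ((a^2+s^2)^2)⁻¹ :=
        integral_comp_abs (f := fun t => ((a^2+t^2)^2)⁻¹)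
    _ = π/(2*a^3) := by rw [hIoi, hF0]; ring

/-- `∫ 1/(c²+y²)³ = 3π/(8c⁵)` plus integrability, for `c ≥ 1`. -/
lemma integral_pow3 (c : ℝ) (hc : 1 ≤ c) :
    Integrable (fun y : ℝ => ((c^2+y^2)^3)⁻¹) ∧
    ∫ y : ℝ, ((c^2+y^2)^3)⁻¹ = 3*π/(8*c^5) := by
  have hc0 : (0:ℝ) < c := lt_of_lt_of_le one_pos hc
  have hcont : Continuous (fun y : ℝ => ((c^2+y^2)^3)⁻¹) := by
    apply Continuous.inv₀ (by fun_prop)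
    intro y; positivity
  have hint : Integrable (fun y : ℝ => ((c^2+y^2)^3)⁻¹) := by
    apply integrable_inv_one_add_sq.mono hcont.aestronglyMeasurable
    filter_upwards with y
    rw [norm_inv, norm_inv, Real.norm_eq_abs, Real.norm_eq_abs,
      _root_.abs_of_pos (by positivity), _root_.abs_of_pos (by positivity)]
    apply inv_anti₀ (by positivity)
    have hc2 : 1 ≤ c^2 := by nlinarith
    calc 1 + y^2 ≤ c^2 + y^2 := by linarith
      _ ≤ (c^2+y^2)^3 := le_self_pow₀ (by linarith [sq_nonneg y]) (by norm_num)
  refine ⟨hint, ?_⟩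
  set F : ℝ → ℝ := fun y => y / (4*c^2*(c^2+y^2)^2) + 3*y/(8*c^4*(c^2+y^2))
      + 3*Real.arctan (y/c) / (8*c^5) with hF
  have hderiv : ∀ y : ℝ, HasDerivAt F (((c^2+y^2)^3)⁻¹) y := by
    intro y
    have hq : HasDerivAt (fun y : ℝ => c^2+y^2) (2*y) y := by
      simpa using (hasDerivAt_pow 2 y).const_add (c^2)
    have hd1 : HasDerivAt (fun y : ℝ => 4*c^2*(c^2+y^2)^2)
        (4*c^2*(2*(c^2+y^2)*(2*y))) y := by
      have h2 : HasDerivAt (fun y : ℝ => (c^2+y^2)^2) (2*(c^2+y^2)*(2*y)) y := by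
        simpa using hq.fun_pow 2
      simpa using h2.const_mul (4*c^2)
    have h1 : HasDerivAt (fun y : ℝ => y / (4*c^2*(c^2+y^2)^2))
        ((1*(4*c^2*(c^2+y^2)^2) - y*(4*c^2*(2*(c^2+y^2)*(2*y))))/(4*c^2*(c^2+y^2)^2)^2) y :=
      (hasDerivAt_id y).div hd1 (by positivity)
    have hd2 : HasDerivAt (fun y : ℝ => 8*c^4*(c^2+y^2)) (8*c^4*(2*y)) y := by
      simpa using hq.const_mul (8*c^4)
    have h2 : HasDerivAt (fun y : ℝ => 3*y/(8*c^4*(c^2+y^2)))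
        ((3*(8*c^4*(c^2+y^2)) - 3*y*(8*c^4*(2*y)))/(8*c^4*(c^2+y^2))^2) y := by
      have hn : HasDerivAt (fun y : ℝ => 3*y) 3 y := by
        simpa using (hasDerivAt_id y).const_mul 3
      exact hn.div hd2 (by positivity)
    have h3 : HasDerivAt (fun y : ℝ => 3*Real.arctan (y/c) / (8*c^5))
        ((3*(1/(1+(y/c)^2) * (1/c))) / (8*c^5)) y := by
      have := (Real.hasDerivAt_arctan (y/c)).comp y ((hasDerivAt_id y).div_const c)
      simpa using (this.const_mul 3).div_const (8*c^5)
    have := (h1.add h2).add h3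
    refine this.congr_deriv ?_
    have h4 : (0:ℝ) < c^2+y^2 := by positivity
    field_simp
    ring
  have htop : Tendsto F atTop (𝓝 (3*π/(16*c^5))) := by
    have t1 : Tendsto (fun y : ℝ => y / (4*c^2*(c^2+y^2)^2)) atTop (𝓝 0) := by
      apply tendsto_lin_div _ (by positivity)
      · filter_upwards [eventually_ge_atTop 1] with y hy
        have hu : y ≤ c^2 + y^2 := by nlinarith [sq_nonneg (y-1)]
        nlinarith [hu, sq_nonneg y]
      · filter_upwards with y; positivity
    have t2 : Tendsto (fun y : ℝ => 3*y/(8*c^4*(c^2+y^2))) atTop (𝓝 0) := by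
      have t2' : Tendsto (fun y : ℝ => y/(8*c^4*(c^2+y^2))) atTop (𝓝 0) := by
        apply tendsto_lin_div _ (by positivity)
        · filter_upwards with y; nlinarith [sq_nonneg c]
        · filter_upwards with y; positivity
      have := t2'.const_mul 3
      rw [mul_zero] at this
      convert this using 2 with y
      ring
    have t3 : Tendsto (fun y : ℝ => 3*Real.arctan (y/c) / (8*c^5))
        (atTop) (𝓝 (3*(π/2)/(8*c^5))) := by
      have := (((Real.tendsto_arctan_atTop.mono_right nhdsWithin_le_nhds).comp
        (Tendsto.atTop_div_const hc0 tendsto_id)).const_mul 3).div_const (8*c^5)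
      convert this using 2 with y
      rfl
    have := (t1.add t2).add t3
    rw [zero_add, zero_add] at this
    convert this using 2
    ring
  have hIoi : ∫ y in Ioi (0:ℝ), ((c^2+y^2)^3)⁻¹ = 3*π/(16*c^5) - F 0 :=
    integral_Ioi_of_hasDerivAt_of_tendsto' (fun y _ => hderiv y) hint.integrableOn htop
  have hF0 : F 0 = 0 := by simp [hF]
  have heven : (fun y : ℝ => ((c^2+y^2)^3)⁻¹) = fun y : ℝ => ((c^2+|y|^2)^3)⁻¹ := by
    funext y; rw [_root_.sq_abs]
  calc ∫ y : ℝ, ((c^2+y^2)^3)⁻¹ = ∫ y : ℝ, ((c^2+|y|^2)^3)⁻¹ := by rw [heven]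
    _ = 2 * ∫ y in Ioi (0:ℝ), ((c^2+y^2)^3)⁻¹ :=
        integral_comp_abs (f := fun t => ((c^2+t^2)^3)⁻¹)
    _ = 3*π/(8*c^5) := by rw [hIoi, hF0]; ring

lemma one_le_sqrt_one_add_sq (x : ℝ) : 1 ≤ Real.sqrt (1+x^2) := by
  have := Real.sqrt_le_sqrt (show (1:ℝ) ≤ 1+x^2 by nlinarith [sq_nonneg x])
  rwa [Real.sqrt_one] at this

lemma sq_sqrt_one_add_sq (x : ℝ) : Real.sqrt (1+x^2)^2 = 1+x^2 :=
  Real.sq_sqrt (by positivity)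

lemma hasDerivAt_sqrt_one_add_sq (x : ℝ) :
    HasDerivAt (fun x : ℝ => Real.sqrt (1+x^2)) (x / Real.sqrt (1+x^2)) x := by
  have h0 : HasDerivAt (fun x : ℝ => 1+x^2) (2*x) x := by
    simpa using (hasDerivAt_pow 2 x).const_add (1:ℝ)
  have := h0.sqrt (by positivity)
  convert this using 1
  have hpos : (0:ℝ) < Real.sqrt (1+x^2) := lt_of_lt_of_le one_pos (one_le_sqrt_one_add_sq x)
  field_simp

lemma tendsto_x_div_sqrt :
    Filter.Tendsto (fun x : ℝ => x / Real.sqrt (1+x^2)) atTop (𝓝 1) := by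
  have h1 : Filter.Tendsto (fun x : ℝ => (Real.sqrt (1/x^2+1))⁻¹) atTop (𝓝 1) := by
    have h2 : Filter.Tendsto (fun x : ℝ => 1/x^2+1) atTop (𝓝 (0+1)) := by
      apply Filter.Tendsto.add_const
      have : Filter.Tendsto (fun x : ℝ => x^2) atTop atTop :=
        tendsto_pow_atTop (by norm_num)
      simpa [one_div, Function.comp_def] using tendsto_inv_atTop_zero.comp this
    rw [zero_add] at h2
    have h3 := (Real.continuous_sqrt.tendsto 1).comp h2
    rw [Real.sqrt_one] at h3
    simpa using h3.inv₀ one_ne_zero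
  apply h1.congr'
  filter_upwards [eventually_gt_atTop 0] with x hx
  rw [show 1/x^2+1 = (1+x^2)/x^2 by field_simp,
    Real.sqrt_div (by positivity) (x^2), Real.sqrt_sq_eq_abs, _root_.abs_of_pos hx, inv_div]

lemma cube_ge (x : ℝ) : 1+x^2 ≤ Real.sqrt (1+x^2)^3 := by
  have hc := one_le_sqrt_one_add_sq x
  have hc2 := sq_sqrt_one_add_sq x
  nlinarith [mul_le_mul_of_nonneg_left hc (sq_nonneg (Real.sqrt (1+x^2)))]

lemma cont_inv_sqrt_pow (n : ℕ) : Continuous (fun x : ℝ => (Real.sqrt (1+x^2)^n)⁻¹) := by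
  apply Continuous.inv₀ ((Real.continuous_sqrt.comp (by fun_prop)).pow n)
  intro x
  have := one_le_sqrt_one_add_sq x
  simp only [Pi.pow_apply, Function.comp_apply]
  positivity

lemma integrable_inv_sqrt_pow (n : ℕ) (hn : 3 ≤ n) :
    Integrable (fun x : ℝ => (Real.sqrt (1+x^2)^n)⁻¹) := by
  apply integrable_inv_one_add_sq.mono (cont_inv_sqrt_pow n).aestronglyMeasurable
  filter_upwards with x
  have hc := one_le_sqrt_one_add_sq x
  rw [norm_inv, norm_inv, Real.norm_eq_abs, Real.norm_eq_abs,
    _root_.abs_of_pos (by positivity), _root_.abs_of_pos (by positivity)]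
  apply inv_anti₀ (by positivity)
  calc 1 + x^2 ≤ Real.sqrt (1+x^2)^3 := cube_ge x
    _ ≤ Real.sqrt (1+x^2)^n := pow_le_pow_right₀ hc hn

lemma integral_sqrt3 :
    Integrable (fun x : ℝ => (Real.sqrt (1+x^2)^3)⁻¹) ∧
    ∫ x : ℝ, (Real.sqrt (1+x^2)^3)⁻¹ = 2 := by
  have hint := integrable_inv_sqrt_pow 3 le_rfl
  refine ⟨hint, ?_⟩
  have hderiv : ∀ x : ℝ, HasDerivAt (fun x : ℝ => x / Real.sqrt (1+x^2))
      ((Real.sqrt (1+x^2)^3)⁻¹) x := by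
    intro x
    have hc := one_le_sqrt_one_add_sq x
    have hc0 : (0:ℝ) < Real.sqrt (1+x^2) := by linarith
    have hc2 := sq_sqrt_one_add_sq x
    have := (hasDerivAt_id x).div (hasDerivAt_sqrt_one_add_sq x) hc0.ne'
    refine this.congr_deriv ?_
    symm
    field_simp
    rw [id_eq]
    linear_combination (-1:ℝ) * hc2
  have hIoi : ∫ x in Ioi (0:ℝ), (Real.sqrt (1+x^2)^3)⁻¹ = 1 - 0/Real.sqrt (1+0^2) :=
    integral_Ioi_of_hasDerivAt_of_tendsto' (fun x _ => hderiv x) hint.integrableOn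
      tendsto_x_div_sqrt
  have heven : (fun x : ℝ => (Real.sqrt (1+x^2)^3)⁻¹)
      = fun x : ℝ => (Real.sqrt (1+|x|^2)^3)⁻¹ := by
    funext x; rw [_root_.sq_abs]
  calc ∫ x : ℝ, (Real.sqrt (1+x^2)^3)⁻¹ = ∫ x : ℝ, (Real.sqrt (1+|x|^2)^3)⁻¹ := by rw [heven]
    _ = 2 * ∫ x in Ioi (0:ℝ), (Real.sqrt (1+x^2)^3)⁻¹ :=
        integral_comp_abs (f := fun t => (Real.sqrt (1+t^2)^3)⁻¹)
    _ = 2 := by rw [hIoi]; norm_num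

lemma integral_sqrt5 :
    Integrable (fun x : ℝ => (Real.sqrt (1+x^2)^5)⁻¹) ∧
    ∫ x : ℝ, (Real.sqrt (1+x^2)^5)⁻¹ = 4/3 := by
  have hint := integrable_inv_sqrt_pow 5 (by norm_num)
  refine ⟨hint, ?_⟩
  set F : ℝ → ℝ := fun x => (x + 2/3*x^3) / Real.sqrt (1+x^2)^3 with hFdef
  have hderiv : ∀ x : ℝ, HasDerivAt F ((Real.sqrt (1+x^2)^5)⁻¹) x := by
    intro x
    have hc := one_le_sqrt_one_add_sq x
    have hc0 : (0:ℝ) < Real.sqrt (1+x^2) := by linarith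
    have hc2 := sq_sqrt_one_add_sq x
    have hnum : HasDerivAt (fun x : ℝ => x + 2/3*x^3) (1 + 2*x^2) x := by
      have := (hasDerivAt_id x).add ((hasDerivAt_pow 3 x).const_mul (2/3:ℝ))
      refine this.congr_deriv ?_
      norm_num
      ring
    have hden : HasDerivAt (fun x : ℝ => Real.sqrt (1+x^2)^3)
        (3 * Real.sqrt (1+x^2)^2 * (x / Real.sqrt (1+x^2))) x :=
      (hasDerivAt_sqrt_one_add_sq x).pow 3
    have := hnum.div hden (by positivity)
    refine this.congr_deriv ?_
    symm
    field_simp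
    linear_combination (-(1+2*x^2)) * hc2
  have htop : Tendsto F atTop (𝓝 (2/3)) := by
    have t1 : Tendsto (fun x : ℝ => x / (1 * Real.sqrt (1+x^2)^3)) atTop (𝓝 0) := by
      apply tendsto_lin_div _ one_pos
      · filter_upwards [eventually_ge_atTop 1] with x hx
        have hc := one_le_sqrt_one_add_sq x
        have hc2 := sq_sqrt_one_add_sq x
        nlinarith [mul_le_mul_of_nonneg_left hc (sq_nonneg (Real.sqrt (1+x^2)))]
      · filter_upwards with x
        have := one_le_sqrt_one_add_sq x
        positivity
    have t2 : Tendsto (fun x : ℝ => 2/3 * (x / Real.sqrt (1+x^2))^3) atTop (𝓝 (2/3 * 1^3)) :=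
      (tendsto_x_div_sqrt.pow 3).const_mul (2/3)
    have hsum := t1.add t2
    rw [zero_add] at hsum
    have : (2:ℝ)/3 * 1^3 = 2/3 := by norm_num
    rw [this] at hsum
    apply hsum.congr
    intro x
    have hc := one_le_sqrt_one_add_sq x
    have hc0 : (0:ℝ) < Real.sqrt (1+x^2) := by linarith
    rw [hFdef]
    simp only
    rw [div_pow]
    field_simp
  have hIoi : ∫ x in Ioi (0:ℝ), (Real.sqrt (1+x^2)^5)⁻¹ = 2/3 - F 0 :=
    integral_Ioi_of_hasDerivAt_of_tendsto' (fun x _ => hderiv x) hint.integrableOn htop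
  have hF0 : F 0 = 0 := by simp [hFdef]
  have heven : (fun x : ℝ => (Real.sqrt (1+x^2)^5)⁻¹)
      = fun x : ℝ => (Real.sqrt (1+|x|^2)^5)⁻¹ := by
    funext x; rw [_root_.sq_abs]
  calc ∫ x : ℝ, (Real.sqrt (1+x^2)^5)⁻¹ = ∫ x : ℝ, (Real.sqrt (1+|x|^2)^5)⁻¹ := by rw [heven]
    _ = 2 * ∫ x in Ioi (0:ℝ), (Real.sqrt (1+x^2)^5)⁻¹ :=
        integral_comp_abs (f := fun t => (Real.sqrt (1+t^2)^5)⁻¹)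
    _ = 4/3 := by rw [hIoi, hF0]; ring

lemma lofReal_mul (b : ℝ) (hb : 0 ≤ b) (f : ℝ → ℝ) (hf : Integrable f)
    (hfnn : ∀ s, 0 ≤ f s) {v : ℝ} (hv : ∫ s, f s = v) :
    ∫⁻ s : ℝ, ENNReal.ofReal (b * f s) = ENNReal.ofReal (b * v) := by
  rw [← ofReal_integral_eq_lintegral_ofReal (hf.const_mul b)
    (Filter.Eventually.of_forall fun s => mul_nonneg hb (hfnn s))]
  rw [integral_const_mul, hv]

lemma integral_T1 :
    ∫ p : ℝ × ℝ × ℝ, 4 / (((1 + p.1^2 + p.2.1^2)^2 + p.2.2^2)^2) = π^2 := by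
  set f : ℝ × ℝ × ℝ → ℝ := fun p => 4 / (((1 + p.1^2 + p.2.1^2)^2 + p.2.2^2)^2) with hfdef
  have hfc : Continuous f := by
    apply Continuous.div continuous_const (by fun_prop)
    intro p; positivity
  have hmeas : Measurable fun p : ℝ × ℝ × ℝ => ENNReal.ofReal (f p) :=
    ENNReal.measurable_ofReal.comp hfc.measurable
  have key : (∫⁻ p : ℝ × ℝ × ℝ, ENNReal.ofReal (f p)) = ENNReal.ofReal (π^2) := by
    rw [Measure.volume_eq_prod, lintegral_prod _ hmeas.aemeasurable]
    have inner : ∀ x : ℝ, (∫⁻ q : ℝ × ℝ, ENNReal.ofReal (f (x, q)))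
        = ENNReal.ofReal ((3*π^2/4) * (Real.sqrt (1+x^2)^5)⁻¹) := by
      intro x
      have hc := one_le_sqrt_one_add_sq x
      have hc2 := sq_sqrt_one_add_sq x
      rw [Measure.volume_eq_prod,
        lintegral_prod (fun q : ℝ × ℝ => ENNReal.ofReal (f (x, q)))
          ((hmeas.comp measurable_prodMk_left).aemeasurable)]
      have innerS : ∀ y : ℝ, (∫⁻ s : ℝ, ENNReal.ofReal (f (x, (y, s))))
          = ENNReal.ofReal ((2*π) * ((Real.sqrt (1+x^2)^2+y^2)^3)⁻¹) := by
        intro y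
        have ha : 1 ≤ 1+x^2+y^2 := by nlinarith [sq_nonneg x, sq_nonneg y]
        have ha0 : (0:ℝ) < 1+x^2+y^2 := by positivity
        have step := lofReal_mul 4 (by norm_num) _ (integral_pow2 _ ha).1
          (fun s => by positivity) (integral_pow2 _ ha).2
        calc (∫⁻ s : ℝ, ENNReal.ofReal (f (x, (y, s))))
            = ∫⁻ s : ℝ, ENNReal.ofReal (4 * (((1+x^2+y^2)^2+s^2)^2)⁻¹) := by
              apply lintegral_congr; intro s; rw [hfdef]; simp only; rw [div_eq_mul_inv]
          _ = ENNReal.ofReal (4 * (π/(2*(1+x^2+y^2)^3))) := step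
          _ = ENNReal.ofReal ((2*π) * ((Real.sqrt (1+x^2)^2+y^2)^3)⁻¹) := by
              rw [hc2]
              congr 1
              field_simp
              ring
      rw [lintegral_congr innerS]
      have step2 := lofReal_mul (2*π) (by positivity) _ (integral_pow3 _ hc).1
        (fun y => by positivity) (integral_pow3 _ hc).2
      rw [step2]
      congr 1
      have hcpos : (0:ℝ) < Real.sqrt (1+x^2) := by linarith
      field_simp
      ring
    rw [lintegral_congr inner]
    have step3 := lofReal_mul (3*π^2/4) (by positivity) _ integral_sqrt5.1
      (fun x => by positivity) integral_sqrt5.2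
    rw [step3]
    congr 1
    ring
  rw [integral_eq_lintegral_of_nonneg_ae
    (Filter.Eventually.of_forall fun p => by positivity) hfc.aestronglyMeasurable,
    key, ENNReal.toReal_ofReal (by positivity)]

lemma integral_T2 :
    ∫ p : ℝ × ℝ × ℝ, 4*(p.1^2+p.2.1^2) / (((1 + p.1^2 + p.2.1^2)^2 + p.2.2^2)^2) = π^2 := by
  set f : ℝ × ℝ × ℝ → ℝ :=
    fun p => 4*(p.1^2+p.2.1^2) / (((1 + p.1^2 + p.2.1^2)^2 + p.2.2^2)^2) with hfdef
  have hfc : Continuous f := by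
    apply Continuous.div (by fun_prop) (by fun_prop)
    intro p; positivity
  have hmeas : Measurable fun p : ℝ × ℝ × ℝ => ENNReal.ofReal (f p) :=
    ENNReal.measurable_ofReal.comp hfc.measurable
  have key : (∫⁻ p : ℝ × ℝ × ℝ, ENNReal.ofReal (f p)) = ENNReal.ofReal (π^2) := by
    rw [Measure.volume_eq_prod, lintegral_prod _ hmeas.aemeasurable]
    have inner : ∀ x : ℝ, (∫⁻ q : ℝ × ℝ, ENNReal.ofReal (f (x, q)))
        = ENNReal.ofReal ((π^2/4) *
            (4*(Real.sqrt (1+x^2)^3)⁻¹ - 3*(Real.sqrt (1+x^2)^5)⁻¹)) := by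
      intro x
      have hc := one_le_sqrt_one_add_sq x
      have hc2 := sq_sqrt_one_add_sq x
      have hcpos : (0:ℝ) < Real.sqrt (1+x^2) := by linarith
      rw [Measure.volume_eq_prod,
        lintegral_prod (fun q : ℝ × ℝ => ENNReal.ofReal (f (x, q)))
          ((hmeas.comp measurable_prodMk_left).aemeasurable)]
      have innerS : ∀ y : ℝ, (∫⁻ s : ℝ, ENNReal.ofReal (f (x, (y, s))))
          = ENNReal.ofReal ((2*π) *
              (((Real.sqrt (1+x^2)^2+y^2)^2)⁻¹ - ((Real.sqrt (1+x^2)^2+y^2)^3)⁻¹)) := by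
        intro y
        have ha : 1 ≤ 1+x^2+y^2 := by nlinarith [sq_nonneg x, sq_nonneg y]
        have ha0 : (0:ℝ) < 1+x^2+y^2 := by positivity
        have step := lofReal_mul (4*(x^2+y^2)) (by positivity) _ (integral_pow2 _ ha).1
          (fun s => by positivity) (integral_pow2 _ ha).2
        calc (∫⁻ s : ℝ, ENNReal.ofReal (f (x, (y, s))))
            = ∫⁻ s : ℝ, ENNReal.ofReal ((4*(x^2+y^2)) * (((1+x^2+y^2)^2+s^2)^2)⁻¹) := by
              apply lintegral_congr; intro s; rw [hfdef]; simp only; rw [div_eq_mul_inv]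
          _ = ENNReal.ofReal ((4*(x^2+y^2)) * (π/(2*(1+x^2+y^2)^3))) := step
          _ = ENNReal.ofReal ((2*π) *
              (((Real.sqrt (1+x^2)^2+y^2)^2)⁻¹ - ((Real.sqrt (1+x^2)^2+y^2)^3)⁻¹)) := by
              rw [hc2]
              congr 1
              field_simp
              ring
      rw [lintegral_congr innerS]
      have hint : Integrable (fun y : ℝ =>
          ((Real.sqrt (1+x^2)^2+y^2)^2)⁻¹ - ((Real.sqrt (1+x^2)^2+y^2)^3)⁻¹) :=
        (integral_pow2 _ hc).1.sub (integral_pow3 _ hc).1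
      have hv : ∫ y : ℝ, (((Real.sqrt (1+x^2)^2+y^2)^2)⁻¹ - ((Real.sqrt (1+x^2)^2+y^2)^3)⁻¹)
          = π/(2*Real.sqrt (1+x^2)^3) - 3*π/(8*Real.sqrt (1+x^2)^5) := by
        rw [integral_sub (integral_pow2 _ hc).1 (integral_pow3 _ hc).1,
          (integral_pow2 _ hc).2, (integral_pow3 _ hc).2]
      have hnn : ∀ y : ℝ,
          0 ≤ ((Real.sqrt (1+x^2)^2+y^2)^2)⁻¹ - ((Real.sqrt (1+x^2)^2+y^2)^3)⁻¹ := by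
        intro y
        have h1 : (1:ℝ) ≤ Real.sqrt (1+x^2)^2+y^2 := by nlinarith [sq_nonneg y]
        have h2 : (Real.sqrt (1+x^2)^2+y^2)^2 ≤ (Real.sqrt (1+x^2)^2+y^2)^3 :=
          pow_le_pow_right₀ h1 (by norm_num)
        have := inv_anti₀ (by positivity) h2
        linarith
      have step2 := lofReal_mul (2*π) (by positivity) _ hint hnn hv
      rw [step2]
      congr 1
      field_simp
      ring
    rw [lintegral_congr inner]
    have hint2 : Integrable (fun x : ℝ =>
        4*(Real.sqrt (1+x^2)^3)⁻¹ - 3*(Real.sqrt (1+x^2)^5)⁻¹) :=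
      (integral_sqrt3.1.const_mul 4).sub (integral_sqrt5.1.const_mul 3)
    have hv2 : ∫ x : ℝ, (4*(Real.sqrt (1+x^2)^3)⁻¹ - 3*(Real.sqrt (1+x^2)^5)⁻¹) = 4 := by
      rw [integral_sub (integral_sqrt3.1.const_mul 4) (integral_sqrt5.1.const_mul 3),
        integral_const_mul, integral_const_mul, integral_sqrt3.2, integral_sqrt5.2]
      norm_num
    have hnn2 : ∀ x : ℝ, 0 ≤ 4*(Real.sqrt (1+x^2)^3)⁻¹ - 3*(Real.sqrt (1+x^2)^5)⁻¹ := by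
      intro x
      have hc := one_le_sqrt_one_add_sq x
      have h2 : Real.sqrt (1+x^2)^3 ≤ Real.sqrt (1+x^2)^5 :=
        pow_le_pow_right₀ hc (by norm_num)
      have := inv_anti₀ (by positivity) h2
      have h3 : (0:ℝ) ≤ (Real.sqrt (1+x^2)^5)⁻¹ := by positivity
      linarith
    have step3 := lofReal_mul (π^2/4) (by positivity) _ hint2 hnn2 hv2
    rw [step3]
    congr 1
    ring
  rw [integral_eq_lintegral_of_nonneg_ae
    (Filter.Eventually.of_forall fun p => by positivity) hfc.aestronglyMeasurable,
    key, ENNReal.toReal_ofReal (by positivity)]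

noncomputable def wfun (p : ℝ × ℝ × ℝ) : ℂ :=
  (p.2.2 : ℝ) + Complex.I * ((p.1 : ℝ)^2 + (p.2.1 : ℝ)^2) + Complex.I

lemma wfun_im (p : ℝ × ℝ × ℝ) : (wfun p).im = p.1^2 + p.2.1^2 + 1 := by
  simp [wfun, ← Complex.ofReal_pow]

lemma wfun_re (p : ℝ × ℝ × ℝ) : (wfun p).re = p.2.2 := by
  simp [wfun, ← Complex.ofReal_pow]

lemma wfun_ne (p : ℝ × ℝ × ℝ) : wfun p ≠ 0 := by
  intro h
  have := congrArg Complex.im h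
  rw [wfun_im] at this
  simp at this
  nlinarith [sq_nonneg p.1, sq_nonneg p.2.1]

lemma normSq_wfun (p : ℝ × ℝ × ℝ) :
    ‖wfun p‖^2 = (1 + p.1^2 + p.2.1^2)^2 + p.2.2^2 := by
  rw [Complex.sq_norm, Complex.normSq_apply, wfun_re, wfun_im]
  ring

lemma Qplus_eq (p : ℝ × ℝ × ℝ) :
    Qplus p = (Complex.I * (Real.sqrt 2 : ℝ)) * (wfun p)⁻¹ := by
  rw [Qplus, wfun, div_eq_mul_inv]

lemma pd_Qplus (p : ℝ × ℝ × ℝ) :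
    pdx Qplus p = 2*(Real.sqrt 2 : ℝ)*(p.1:ℂ) / (wfun p)^2 ∧
    pdy Qplus p = 2*(Real.sqrt 2 : ℝ)*(p.2.1:ℂ) / (wfun p)^2 ∧
    pds Qplus p = -(Complex.I*((Real.sqrt 2 : ℝ):ℂ)) / (wfun p)^2 := by
  have hxl : HasFDerivAt (fun q : ℝ × ℝ × ℝ => ((q.1 : ℝ) : ℂ))
      (Complex.ofRealCLM.comp (ContinuousLinearMap.fst ℝ ℝ (ℝ × ℝ))) p :=
    (Complex.ofRealCLM.comp (ContinuousLinearMap.fst ℝ ℝ (ℝ × ℝ))).hasFDerivAt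
  have hyl : HasFDerivAt (fun q : ℝ × ℝ × ℝ => ((q.2.1 : ℝ) : ℂ))
      (Complex.ofRealCLM.comp ((ContinuousLinearMap.fst ℝ ℝ ℝ).comp
        (ContinuousLinearMap.snd ℝ ℝ (ℝ × ℝ)))) p :=
    (Complex.ofRealCLM.comp ((ContinuousLinearMap.fst ℝ ℝ ℝ).comp
        (ContinuousLinearMap.snd ℝ ℝ (ℝ × ℝ)))).hasFDerivAt
  have hsl : HasFDerivAt (fun q : ℝ × ℝ × ℝ => ((q.2.2 : ℝ) : ℂ))
      (Complex.ofRealCLM.comp ((ContinuousLinearMap.snd ℝ ℝ ℝ).comp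
        (ContinuousLinearMap.snd ℝ ℝ (ℝ × ℝ)))) p :=
    (Complex.ofRealCLM.comp ((ContinuousLinearMap.snd ℝ ℝ ℝ).comp
        (ContinuousLinearMap.snd ℝ ℝ (ℝ × ℝ)))).hasFDerivAt
  have hx2 : HasFDerivAt (fun q : ℝ × ℝ × ℝ => ((q.1 : ℝ) : ℂ)^2)
      ((p.1:ℂ) • (Complex.ofRealCLM.comp (ContinuousLinearMap.fst ℝ ℝ (ℝ × ℝ))) +
       (p.1:ℂ) • (Complex.ofRealCLM.comp (ContinuousLinearMap.fst ℝ ℝ (ℝ × ℝ)))) p := by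
    simpa [pow_two] using hxl.fun_mul hxl
  have hy2 : HasFDerivAt (fun q : ℝ × ℝ × ℝ => ((q.2.1 : ℝ) : ℂ)^2)
      ((p.2.1:ℂ) • (Complex.ofRealCLM.comp ((ContinuousLinearMap.fst ℝ ℝ ℝ).comp
        (ContinuousLinearMap.snd ℝ ℝ (ℝ × ℝ)))) +
       (p.2.1:ℂ) • (Complex.ofRealCLM.comp ((ContinuousLinearMap.fst ℝ ℝ ℝ).comp
        (ContinuousLinearMap.snd ℝ ℝ (ℝ × ℝ))))) p := by
    simpa [pow_two] using hyl.fun_mul hyl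
  have hw := (hsl.add ((hx2.add hy2).const_mul Complex.I)).add_const Complex.I
  have hinv := ((hasFDerivAt_inv (wfun_ne p)).restrictScalars ℝ).comp p hw
  have h := hinv.const_mul (Complex.I * ((Real.sqrt 2 : ℝ) : ℂ))
  rw [show (fun q : ℝ × ℝ × ℝ => (Complex.I * ((Real.sqrt 2 : ℝ) : ℂ)) *
      ((fun z : ℂ => z⁻¹) ∘ wfun) q) = Qplus
    from funext fun q => by rw [Qplus_eq]; rfl] at h
  refine ⟨?_, ?_, ?_⟩
  · rw [pdx, h.fderiv]
    simp only [ContinuousLinearMap.smul_apply, ContinuousLinearMap.coe_comp',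
      ContinuousLinearMap.coe_restrictScalars', Function.comp_apply,
      ContinuousLinearMap.add_apply, ContinuousLinearMap.smulRight_apply,
      ContinuousLinearMap.one_apply, ContinuousLinearMap.coe_fst',
      ContinuousLinearMap.coe_snd', Complex.ofRealCLM_apply]
    norm_num
    linear_combination (-2*((Real.sqrt 2:ℝ):ℂ)*(p.1:ℂ)*((wfun p)^2)⁻¹) * Complex.I_sq
  · rw [pdy, h.fderiv]
    simp only [ContinuousLinearMap.smul_apply, ContinuousLinearMap.coe_comp',
      ContinuousLinearMap.coe_restrictScalars', Function.comp_apply,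
      ContinuousLinearMap.add_apply, ContinuousLinearMap.smulRight_apply,
      ContinuousLinearMap.one_apply, ContinuousLinearMap.coe_fst',
      ContinuousLinearMap.coe_snd', Complex.ofRealCLM_apply]
    norm_num
    linear_combination (-2*((Real.sqrt 2:ℝ):ℂ)*(p.2.1:ℂ)*((wfun p)^2)⁻¹) * Complex.I_sq
  · rw [pds, h.fderiv]
    simp only [ContinuousLinearMap.smul_apply, ContinuousLinearMap.coe_comp',
      ContinuousLinearMap.coe_restrictScalars', Function.comp_apply,
      ContinuousLinearMap.add_apply, ContinuousLinearMap.smulRight_apply,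
      ContinuousLinearMap.one_apply, ContinuousLinearMap.coe_fst',
      ContinuousLinearMap.coe_snd', Complex.ofRealCLM_apply]
    norm_num
    ring

lemma norm_Qplus4 (p : ℝ × ℝ × ℝ) :
    ‖Qplus p‖^4 = 4 / (((1 + p.1^2 + p.2.1^2)^2 + p.2.2^2)^2) := by
  have hD : (0:ℝ) < (1 + p.1^2 + p.2.1^2)^2 + p.2.2^2 := by positivity
  have h2 : (Real.sqrt 2)^2 = 2 := Real.sq_sqrt (by norm_num)
  have hn : ‖Qplus p‖ = Real.sqrt 2 * ‖wfun p‖⁻¹ := by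
    rw [Qplus_eq, norm_mul, norm_inv, norm_mul, Complex.norm_I, one_mul,
      Complex.norm_real, Real.norm_eq_abs, _root_.abs_of_nonneg (Real.sqrt_nonneg 2)]
  rw [hn, mul_pow, inv_pow]
  have h4 : (Real.sqrt 2)^4 = 4 := by nlinarith [h2]
  have hw4 : ‖wfun p‖^4 = ((1 + p.1^2 + p.2.1^2)^2 + p.2.2^2)^2 := by
    rw [show (4:ℕ) = 2*2 from rfl, pow_mul, normSq_wfun]
  rw [h4, hw4, div_eq_mul_inv]

lemma energy_integrand (p : ℝ × ℝ × ℝ) :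
    (1/4) * (‖pdx Qplus p‖^2 + ‖pdy Qplus p‖^2) + (p.1^2 + p.2.1^2) * ‖pds Qplus p‖^2
      = 4*(p.1^2+p.2.1^2) / (((1 + p.1^2 + p.2.1^2)^2 + p.2.2^2)^2) := by
  obtain ⟨h1, h2, h3⟩ := pd_Qplus p
  have hD : (0:ℝ) < (1 + p.1^2 + p.2.1^2)^2 + p.2.2^2 := by positivity
  have hs2 : (Real.sqrt 2)^2 = 2 := Real.sq_sqrt (by norm_num)
  have hw4 : ‖(wfun p)^2‖^2 = ((1 + p.1^2 + p.2.1^2)^2 + p.2.2^2)^2 := by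
    rw [norm_pow, ← pow_mul, show (2*2:ℕ) = 2*2 from rfl, pow_mul, normSq_wfun]
  rw [h1, h2, h3]
  rw [norm_div, norm_div, norm_div, div_pow, div_pow, div_pow, hw4]
  have hnx : ‖2*((Real.sqrt 2:ℝ):ℂ)*(p.1:ℂ)‖^2 = 8*p.1^2 := by
    rw [norm_mul, norm_mul, Complex.norm_real, Complex.norm_real, Real.norm_eq_abs,
      Real.norm_eq_abs, _root_.abs_of_nonneg (Real.sqrt_nonneg 2)]
    have : ‖(2:ℂ)‖ = 2 := by norm_num
    rw [this]
    rw [mul_pow, mul_pow, hs2, _root_.sq_abs]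
    ring
  have hny : ‖2*((Real.sqrt 2:ℝ):ℂ)*(p.2.1:ℂ)‖^2 = 8*p.2.1^2 := by
    rw [norm_mul, norm_mul, Complex.norm_real, Complex.norm_real, Real.norm_eq_abs,
      Real.norm_eq_abs, _root_.abs_of_nonneg (Real.sqrt_nonneg 2)]
    have : ‖(2:ℂ)‖ = 2 := by norm_num
    rw [this]
    rw [mul_pow, mul_pow, hs2, _root_.sq_abs]
    ring
  have hns : ‖-(Complex.I*((Real.sqrt 2:ℝ):ℂ))‖^2 = 2 := by
    rw [norm_neg, norm_mul, Complex.norm_I, one_mul, Complex.norm_real,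
      Real.norm_eq_abs, _root_.abs_of_nonneg (Real.sqrt_nonneg 2), hs2]
  rw [hnx, hny, hns]
  field_simp
  ring

/-- The normalization of the ground state:
`∫|Q₊|⁴ = π²` (equivalently `∫ 4/(((1+x²+y²)²+s²)²) = π²`) and `E(Q₊) = π²`. -/
theorem Qplus_norms :
    (∫ p : ℝ × ℝ × ℝ, ‖Qplus p‖^4) = π^2 ∧
    (∫ p : ℝ × ℝ × ℝ, 4 / (((1 + p.1^2 + p.2.1^2)^2 + p.2.2^2)^2)) = π^2 ∧
    energy Qplus = π^2 := by
  have hT1 : (∫ p : ℝ × ℝ × ℝ, ‖Qplus p‖^4) = π^2 := by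
    simp only [norm_Qplus4]
    exact integral_T1
  refine ⟨hT1, integral_T1, ?_⟩
  rw [energy]
  simp only [energy_integrand]
  exact integral_T2
end

section
/- Let F : ℂ₊ → ℂ be holomorphic on the open upper half-plane ℂ₊ = {z ∈ ℂ : Im z > 0} and satisfy sup_{t>0} ∫_ℝ |F(s+it)|² ds < ∞. Then for every t > 0, ∫_ℝ F(s+it) / ( s − i(t+1) )² ds = 2iπ F'( i(2t+1) ), the integral being absolutely convergent. -/
open MeasureTheory Complex Real Set
open scoped ENNReal NNReal Interval

/-- The open upper half-plane in `ℂ`. -/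
def UHP : Set ℂ := {z : ℂ | 0 < z.im}

lemma UHP_open : IsOpen UHP := isOpen_Ioi.preimage Complex.continuous_im

lemma aux_rect_zero (f : ℂ → ℂ) (a b c d : ℝ)
    (H : DifferentiableOn ℂ f ([[a, b]] ×ℂ [[c, d]])) :
    (∫ x in a..b, f (x + c*I)) - (∫ x in a..b, f (x + d*I)) +
      I • (∫ y in c..d, f (b + y*I)) - I • (∫ y in c..d, f (a + y*I)) = 0 := by
  have := Complex.integral_boundary_rect_eq_zero_of_differentiableOn f (a + c*I) (b + d*I)
    (by simpa using H)
  simpa using this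

lemma aux_horiz (Φ q : ℂ → ℂ) (a b y : ℝ)
    (h : ∀ x ∈ uIcc a b, HasDerivAt Φ (q ((x:ℂ) + y*I)) ((x:ℂ) + y*I))
    (hcont : ContinuousOn (fun x : ℝ => q ((x:ℂ) + y*I)) (uIcc a b)) :
    ∫ x in a..b, q ((x:ℂ) + y*I) = Φ ((b:ℂ) + y*I) - Φ ((a:ℂ) + y*I) := by
  apply intervalIntegral.integral_eq_sub_of_hasDerivAt
  · intro x hx
    have h1 : HasDerivAt (fun z : ℂ => Φ (z + (y:ℂ)*I)) (q ((x:ℂ) + y*I)) (x:ℂ) := by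
      have := (h x hx).comp (x:ℂ) ((hasDerivAt_id ((x:ℂ))).add_const ((y:ℂ)*I))
      simp at this; exact this
    simpa using h1.comp_ofReal
  · exact hcont.intervalIntegrable

lemma aux_vert (Φ q : ℂ → ℂ) (x0 c d : ℝ)
    (h : ∀ y ∈ uIcc c d, HasDerivAt Φ (q ((x0:ℂ) + y*I)) ((x0:ℂ) + y*I))
    (hcont : ContinuousOn (fun y : ℝ => q ((x0:ℂ) + y*I)) (uIcc c d)) :
    I • ∫ y in c..d, q ((x0:ℂ) + y*I) = Φ ((x0:ℂ) + d*I) - Φ ((x0:ℂ) + c*I) := by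
  have key : ∫ y in c..d, q ((x0:ℂ) + y*I) * I
      = Φ ((x0:ℂ) + d*I) - Φ ((x0:ℂ) + c*I) := by
    apply intervalIntegral.integral_eq_sub_of_hasDerivAt
    · intro y hy
      have hin : HasDerivAt (fun y : ℝ => (x0:ℂ) + y*I) I y := by
        have : HasDerivAt (fun z : ℂ => (x0:ℂ) + z*I) I (y:ℂ) := by
          simpa using ((hasDerivAt_id ((y:ℂ))).mul_const I).const_add (x0:ℂ)
        simpa using this.comp_ofReal
      exact (h y hy).comp y hin
    · exact (hcont.mul (continuousOn_const)).intervalIntegrable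
  rw [← key, intervalIntegral.integral_mul_const]
  rw [smul_eq_mul, mul_comm]

-- The rectangle contour integral of (z-w)^{-2} vanishes when the edges avoid w.
lemma aux_Sq2 (w : ℂ) (a b c d : ℝ) (hc : c ≠ w.im) (hd : d ≠ w.im)
    (ha : a ≠ w.re) (hb : b ≠ w.re) :
    (∫ x in a..b, (((x:ℂ) + c*I - w)^2)⁻¹) - (∫ x in a..b, (((x:ℂ) + d*I - w)^2)⁻¹) +
      I • (∫ y in c..d, (((b:ℂ) + y*I - w)^2)⁻¹) -
      I • (∫ y in c..d, (((a:ℂ) + y*I - w)^2)⁻¹) = 0 := by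
  set Φ : ℂ → ℂ := fun z => -(z - w)⁻¹ with hΦ
  have hder : ∀ z : ℂ, z ≠ w → HasDerivAt Φ (((z - w)^2)⁻¹) z := by
    intro z hz
    have h0 : z - w ≠ 0 := sub_ne_zero.2 hz
    have := (((hasDerivAt_id z).sub_const w).inv h0).neg
    refine this.congr_deriv ?_
    simp only [id]
    field_simp
  have hne_h : ∀ (y : ℝ) (x : ℝ), y ≠ w.im → ((x:ℂ) + y*I) ≠ w := by
    intro y x hy h
    apply hy
    have := congrArg Complex.im h
    simpa using this
  have hne_v : ∀ (x : ℝ) (y : ℝ), x ≠ w.re → ((x:ℂ) + y*I) ≠ w := by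
    intro x y hx h
    apply hx
    have := congrArg Complex.re h
    simpa using this
  have hcont : ∀ (S : Set ℝ) (e : ℝ → ℂ), Continuous e → (∀ u ∈ S, e u ≠ w) →
      ContinuousOn (fun u : ℝ => ((e u - w)^2)⁻¹) S := by
    intro S e he hne
    exact (((he.sub continuous_const).pow 2).continuousOn).inv₀
      (fun u hu => pow_ne_zero 2 (sub_ne_zero.2 (hne u hu)))
  have ceh : ∀ y : ℝ, Continuous fun u : ℝ => (u:ℂ) + (y:ℂ)*I :=
    fun y => Complex.continuous_ofReal.add continuous_const
  have cev : ∀ x : ℝ, Continuous fun u : ℝ => (x:ℂ) + (u:ℂ)*I :=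
    fun x => continuous_const.add (Complex.continuous_ofReal.mul continuous_const)
  rw [aux_horiz Φ (fun z => ((z - w)^2)⁻¹) a b c
      (fun x _ => hder _ (hne_h c x hc)) (hcont _ _ (ceh c) (fun x _ => hne_h c x hc)),
    aux_horiz Φ (fun z => ((z - w)^2)⁻¹) a b d
      (fun x _ => hder _ (hne_h d x hd)) (hcont _ _ (ceh d) (fun x _ => hne_h d x hd)),
    aux_vert Φ (fun z => ((z - w)^2)⁻¹) b c d
      (fun y _ => hder _ (hne_v b y hb)) (hcont _ _ (cev b) (fun y _ => hne_v b y hb)),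
    aux_vert Φ (fun z => ((z - w)^2)⁻¹) a c d
      (fun y _ => hder _ (hne_v a y ha)) (hcont _ _ (cev a) (fun y _ => hne_v a y ha))]
  ring

-- The rectangle contour integral of (z-w)^{-1} equals 2πi when w is inside.
lemma aux_Sq1 (w : ℂ) (hw : w.re = 0) (a b c d : ℝ) (ha : a < 0) (hb : 0 < b)
    (hc : c < w.im) (hd : w.im < d) :
    (∫ x in a..b, ((x:ℂ) + c*I - w)⁻¹) - (∫ x in a..b, ((x:ℂ) + d*I - w)⁻¹) +
      I • (∫ y in c..d, ((b:ℂ) + y*I - w)⁻¹) -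
      I • (∫ y in c..d, ((a:ℂ) + y*I - w)⁻¹) = 2*π*I := by
  set Φ : ℂ → ℂ := fun z => Complex.log (z - w) with hΦ
  set Ψ : ℂ → ℂ := fun z => Complex.log (-(z - w)) with hΨ
  have hderΦ : ∀ z : ℂ, (z - w) ∈ Complex.slitPlane → HasDerivAt Φ ((z - w)⁻¹) z := by
    intro z hz
    have := (Complex.hasDerivAt_log hz).comp z ((hasDerivAt_id z).sub_const w)
    simp at this; exact this
  have hderΨ : ∀ z : ℂ, (-(z - w)) ∈ Complex.slitPlane → HasDerivAt Ψ ((z - w)⁻¹) z := by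
    intro z hz
    have h0 : -(z - w) ≠ 0 := Complex.slitPlane_ne_zero hz
    have := (Complex.hasDerivAt_log hz).comp z (((hasDerivAt_id z).sub_const w).neg)
    refine this.congr_deriv ?_
    rw [inv_neg]; ring
  have hmem_b : ∀ x : ℝ, ((x:ℂ) + c*I - w) ∈ Complex.slitPlane := by
    intro x; right; simp; intro h; exact absurd h (by linarith)
  have hmem_t : ∀ x : ℝ, ((x:ℂ) + d*I - w) ∈ Complex.slitPlane := by
    intro x; right; simp; intro h; exact absurd h (by linarith)
  have hmem_r : ∀ y : ℝ, (((b:ℂ) + y*I - w)) ∈ Complex.slitPlane := by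
    intro y; left; simp [hw, hb]
  have hmem_l : ∀ y : ℝ, (-((a:ℂ) + y*I - w)) ∈ Complex.slitPlane := by
    intro y; left; simp [hw]; linarith
  have hcont : ∀ (S : Set ℝ) (e : ℝ → ℂ), Continuous e → (∀ u ∈ S, e u ≠ w) →
      ContinuousOn (fun u : ℝ => (e u - w)⁻¹) S := by
    intro S e he hne
    exact ((he.sub continuous_const).continuousOn).inv₀
      (fun u hu => sub_ne_zero.2 (hne u hu))
  have ceh : ∀ y : ℝ, Continuous fun u : ℝ => (u:ℂ) + (y:ℂ)*I :=
    fun y => Complex.continuous_ofReal.add continuous_const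
  have cev : ∀ x : ℝ, Continuous fun u : ℝ => (x:ℂ) + (u:ℂ)*I :=
    fun x => continuous_const.add (Complex.continuous_ofReal.mul continuous_const)
  have hne_b : ∀ x : ℝ, ((x:ℂ) + c*I) ≠ w :=
    fun x h => absurd (by simpa using congrArg Complex.im h) (ne_of_lt hc)
  have hne_t : ∀ x : ℝ, ((x:ℂ) + d*I) ≠ w :=
    fun x h => absurd (by simpa using congrArg Complex.im h) (ne_of_gt hd)
  have hne_r : ∀ y : ℝ, ((b:ℂ) + y*I) ≠ w := by
    intro y h
    have := congrArg Complex.re h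
    simp [hw] at this
    exact absurd this (ne_of_gt hb)
  have hne_l : ∀ y : ℝ, ((a:ℂ) + y*I) ≠ w := by
    intro y h
    have := congrArg Complex.re h
    simp [hw] at this
    exact absurd this (ne_of_lt ha)
  rw [aux_horiz Φ (fun z => (z - w)⁻¹) a b c
      (fun x _ => hderΦ _ (hmem_b x)) (hcont _ _ (ceh c) (fun x _ => hne_b x)),
    aux_horiz Φ (fun z => (z - w)⁻¹) a b d
      (fun x _ => hderΦ _ (hmem_t x)) (hcont _ _ (ceh d) (fun x _ => hne_t x)),
    aux_vert Φ (fun z => (z - w)⁻¹) b c d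
      (fun y _ => hderΦ _ (hmem_r y)) (hcont _ _ (cev b) (fun y _ => hne_r y)),
    aux_vert Ψ (fun z => (z - w)⁻¹) a c d
      (fun y _ => hderΨ _ (hmem_l y)) (hcont _ _ (cev a) (fun y _ => hne_l y))]
  have key_pos : ∀ u : ℂ, 0 < u.im → Complex.log u - Complex.log (-u) = (π:ℂ)*I := by
    intro u h
    have habs : ‖-u‖ = ‖u‖ := by simp
    apply Complex.ext
    · simp [Complex.sub_re, Complex.log_re, habs]
    · simp [Complex.sub_im, Complex.log_im, Complex.arg_neg_eq_arg_sub_pi_of_im_pos h]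
  have key_neg : ∀ u : ℂ, u.im < 0 → Complex.log u - Complex.log (-u) = -((π:ℂ)*I) := by
    intro u h
    have habs : ‖-u‖ = ‖u‖ := by simp
    apply Complex.ext
    · simp [Complex.sub_re, Complex.log_re, habs]
    · simp [Complex.sub_im, Complex.log_im, Complex.arg_neg_eq_arg_add_pi_of_im_neg h]
  have h1 : Φ ((a:ℂ) + d*I) - Ψ ((a:ℂ) + d*I) = (π:ℂ)*I :=
    key_pos ((a:ℂ) + d*I - w) (by simpa using sub_pos.2 hd)
  have h2 : Φ ((a:ℂ) + c*I) - Ψ ((a:ℂ) + c*I) = -((π:ℂ)*I) :=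
    key_neg ((a:ℂ) + c*I - w) (by simpa using sub_neg.2 hc)
  have expand : (Φ ((b:ℂ) + c*I) - Φ ((a:ℂ) + c*I)) - (Φ ((b:ℂ) + d*I) - Φ ((a:ℂ) + d*I))
      + (Φ ((b:ℂ) + d*I) - Φ ((b:ℂ) + c*I)) - (Ψ ((a:ℂ) + d*I) - Ψ ((a:ℂ) + c*I))
      = (Φ ((a:ℂ) + d*I) - Ψ ((a:ℂ) + d*I)) - (Φ ((a:ℂ) + c*I) - Ψ ((a:ℂ) + c*I)) := by ring
  rw [expand, h1, h2]
  ring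

lemma aux_line_cont {F : ℂ → ℂ} (hF : DifferentiableOn ℂ F UHP) {y : ℝ} (hy : 0 < y) :
    Continuous fun s : ℝ => F ((s:ℂ) + (y:ℂ)*I) := by
  apply hF.continuousOn.comp_continuous
    (Complex.continuous_ofReal.add continuous_const)
  intro s
  show 0 < ((s:ℂ) + (y:ℂ)*I).im
  simpa using hy

lemma aux_nnorm_sq (z : ℂ) : (‖(‖z‖^2 : ℝ)‖₊ : ℝ≥0∞) = (‖z‖₊ : ℝ≥0∞)^2 := by
  rw [nnnorm_pow, nnnorm_norm, ENNReal.coe_pow]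

lemma aux_ofReal_sq (z : ℂ) : ENNReal.ofReal (‖z‖^2) = (‖z‖₊ : ℝ≥0∞)^2 := by
  rw [← ENNReal.coe_pow, ← ENNReal.ofReal_coe_nnreal, NNReal.coe_pow, coe_nnnorm]

lemma aux_L2 {F : ℂ → ℂ} (hF : DifferentiableOn ℂ F UHP) {M' : ℝ} (hM'0 : 0 ≤ M')
    (hb : ∀ y : ℝ, 0 < y → ∫⁻ s : ℝ, (‖F ((s:ℂ) + (y:ℂ)*I)‖₊ : ℝ≥0∞)^2 ≤ ENNReal.ofReal M')
    {y : ℝ} (hy : 0 < y) :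
    Integrable (fun s : ℝ => ‖F ((s:ℂ) + (y:ℂ)*I)‖^2)
      ∧ ∫ s : ℝ, ‖F ((s:ℂ) + (y:ℂ)*I)‖^2 ≤ M' := by
  have hcont := aux_line_cont hF hy
  have hmeas : AEStronglyMeasurable (fun s : ℝ => ‖F ((s:ℂ) + (y:ℂ)*I)‖^2) volume :=
    ((hcont.norm.pow 2)).aestronglyMeasurable
  have hfin : HasFiniteIntegral (fun s : ℝ => ‖F ((s:ℂ) + (y:ℂ)*I)‖^2) volume := by
    rw [HasFiniteIntegral]
    calc ∫⁻ s : ℝ, (‖(‖F ((s:ℂ) + (y:ℂ)*I)‖^2 : ℝ)‖₊ : ℝ≥0∞)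
        = ∫⁻ s : ℝ, (‖F ((s:ℂ) + (y:ℂ)*I)‖₊ : ℝ≥0∞)^2 := by
          simp_rw [aux_nnorm_sq]
      _ ≤ ENNReal.ofReal M' := hb y hy
      _ < ⊤ := ENNReal.ofReal_lt_top
  refine ⟨⟨hmeas, hfin⟩, ?_⟩
  rw [integral_eq_lintegral_of_nonneg_ae (ae_of_all _ fun s => by positivity) hmeas]
  apply ENNReal.toReal_le_of_le_ofReal hM'0
  calc ∫⁻ s : ℝ, ENNReal.ofReal (‖F ((s:ℂ) + (y:ℂ)*I)‖^2)
      = ∫⁻ s : ℝ, (‖F ((s:ℂ) + (y:ℂ)*I)‖₊ : ℝ≥0∞)^2 := by simp_rw [aux_ofReal_sq]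
    _ ≤ ENNReal.ofReal M' := hb y hy

lemma aux_kernel_integrable {c : ℝ} (hc : 0 < c) :
    Integrable (fun s : ℝ => (s^2 + c^2)⁻¹) := by
  have h1 : Integrable (fun s : ℝ => (max 1 (c^2)⁻¹) * (1 + s^2)⁻¹) :=
    integrable_inv_one_add_sq.const_mul _
  apply h1.mono' ((show Continuous fun s : ℝ => s^2 + c^2 from (continuous_pow 2).add continuous_const).inv₀
      (fun s => by positivity)).aestronglyMeasurable  -- measurability of s ↦ (s²+c²)⁻¹
  · filter_upwards with s
    show ‖(s^2 + c^2)⁻¹‖ ≤ _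
    rw [Real.norm_of_nonneg (by positivity : (0:ℝ) ≤ (s^2 + c^2)⁻¹)]
    rcases le_total 1 (c^2) with h | h
    · calc (s^2 + c^2)⁻¹ ≤ (1 + s^2)⁻¹ := by
            apply inv_anti₀ (by positivity); linarith
        _ ≤ max 1 (c^2)⁻¹ * (1 + s^2)⁻¹ := by
            nlinarith [le_max_left 1 (c^2)⁻¹, inv_nonneg.2 (add_nonneg zero_le_one (sq_nonneg s))]
    · have hcc : (0:ℝ) < c^2 := by positivity
      calc (s^2 + c^2)⁻¹ ≤ (c^2 * (1 + s^2))⁻¹ * 1 := by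
            rw [mul_one]
            apply inv_anti₀ (by positivity)
            nlinarith [sq_nonneg s]
        _ = (c^2)⁻¹ * (1 + s^2)⁻¹ := by rw [mul_inv, mul_one]
        _ ≤ max 1 (c^2)⁻¹ * (1 + s^2)⁻¹ := by
            apply mul_le_mul_of_nonneg_right (le_max_right _ _) (by positivity)

lemma aux_kernel_integral {c : ℝ} (hc : 0 < c) :
    ∫ s : ℝ, (s^2 + c^2)⁻¹ = π / c := by
  have h1 : ∀ s : ℝ, (s^2 + c^2)⁻¹ = c⁻¹ * c⁻¹ * (1 + (s/c)^2)⁻¹ := by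
    intro s
    have : (1 + (s/c)^2) = (s^2 + c^2) / (c^2) := by field_simp; ring
    rw [this, inv_div]
    field_simp
  simp_rw [h1]
  rw [MeasureTheory.integral_const_mul]
  rw [MeasureTheory.Measure.integral_comp_div (fun u : ℝ => (1 + u^2)⁻¹) c]
  rw [integral_univ_inv_one_add_sq]
  rw [abs_of_pos hc, smul_eq_mul]
  field_simp

lemma aux_exists_slice {F : ℂ → ℂ} (hF : DifferentiableOn ℂ F UHP) {M1 : ℝ≥0∞}
    (hM1 : M1 ≠ ⊤)
    (hb : ∀ y : ℝ, 0 < y → ∫⁻ s : ℝ, (‖F ((s:ℂ) + (y:ℂ)*I)‖₊ : ℝ≥0∞)^2 ≤ M1)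
    (p L t T : ℝ) (hL : 0 < L) (ht : 0 < t) (htT : t < T) (hTL : T - t ≤ L) :
    ∃ x ∈ Icc p (p+L), ∫⁻ y in Ioc t T, (‖F ((x:ℂ) + (y:ℂ)*I)‖₊ : ℝ≥0∞)^2 ≤ M1 + 1 := by
  by_contra hcon
  push_neg at hcon
  set f : ℝ → ℝ → ℝ≥0∞ := fun x y => (‖F ((x:ℂ) + (y:ℂ)*I)‖₊ : ℝ≥0∞)^2 with hf
  have hmeas : AEMeasurable (Function.uncurry f)
      ((volume.restrict (Icc p (p+L))).prod (volume.restrict (Ioc t T))) := by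
    rw [Measure.prod_restrict]
    apply ContinuousOn.aemeasurable ?_ (measurableSet_Icc.prod measurableSet_Ioc)
    have hco : ContinuousOn (Function.uncurry f) {q : ℝ × ℝ | 0 < q.2} := by
      have hψ : Continuous fun q : ℝ × ℝ => ((q.1 : ℂ) + (q.2 : ℂ)*I) := by
        exact (Complex.continuous_ofReal.comp continuous_fst).add
          ((Complex.continuous_ofReal.comp continuous_snd).mul continuous_const)
      have hFψ : ContinuousOn (fun q : ℝ × ℝ => F ((q.1 : ℂ) + (q.2 : ℂ)*I))
          {q : ℝ × ℝ | 0 < q.2} := by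
        apply hF.continuousOn.comp hψ.continuousOn
        intro q hq
        show 0 < ((q.1 : ℂ) + (q.2 : ℂ)*I).im
        simpa using hq
      have hout : Continuous fun z : ℂ => (‖z‖₊ : ℝ≥0∞)^2 :=
        (ENNReal.continuous_pow 2).comp (ENNReal.continuous_coe.comp continuous_nnnorm)
      exact hout.comp_continuousOn hFψ
    apply hco.mono
    rintro ⟨x, y⟩ ⟨_, hy⟩
    exact lt_trans ht hy.1
  have swap := lintegral_lintegral_swap hmeas
  have lower : (M1 + 1) * ENNReal.ofReal L
      ≤ ∫⁻ x in Icc p (p+L), ∫⁻ y in Ioc t T, f x y := by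
    have : ∫⁻ _ in Icc p (p+L), (M1 + 1) ∂(volume) = (M1 + 1) * ENNReal.ofReal L := by
      rw [MeasureTheory.setLIntegral_const, Real.volume_Icc]
      norm_num
    rw [← this]
    apply lintegral_mono_ae
    rw [ae_restrict_iff' measurableSet_Icc]
    exact ae_of_all _ fun x hx => (hcon x hx).le
  have upper : ∫⁻ y in Ioc t T, ∫⁻ x in Icc p (p+L), f x y ≤ M1 * ENNReal.ofReal L := by
    calc ∫⁻ y in Ioc t T, ∫⁻ x in Icc p (p+L), f x y
        ≤ ∫⁻ _ in Ioc t T, M1 := by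
          apply lintegral_mono_ae
          rw [ae_restrict_iff' measurableSet_Ioc]
          apply ae_of_all
          intro y hy
          calc ∫⁻ x in Icc p (p+L), f x y ≤ ∫⁻ x, f x y := setLIntegral_le_lintegral _ _
            _ ≤ M1 := hb y (lt_trans ht hy.1)
      _ = M1 * ENNReal.ofReal (T - t) := by rw [MeasureTheory.setLIntegral_const, Real.volume_Ioc]
      _ ≤ M1 * ENNReal.ofReal L := mul_le_mul_right (ENNReal.ofReal_le_ofReal hTL) _
  have : (M1 + 1) * ENNReal.ofReal L ≤ M1 * ENNReal.ofReal L := by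
    calc (M1 + 1) * ENNReal.ofReal L ≤ ∫⁻ x in Icc p (p+L), ∫⁻ y in Ioc t T, f x y := lower
      _ = ∫⁻ y in Ioc t T, ∫⁻ x in Icc p (p+L), f x y := swap
      _ ≤ M1 * ENNReal.ofReal L := upper
  have hL0 : ENNReal.ofReal L ≠ 0 := by
    simp [ENNReal.ofReal_eq_zero]; linarith
  have := (ENNReal.mul_le_mul_iff_left hL0 ENNReal.ofReal_ne_top).mp this
  exact absurd this (not_le.2 (ENNReal.lt_add_right hM1 one_ne_zero))

lemma aux_vline_cont {F : ℂ → ℂ} (hF : DifferentiableOn ℂ F UHP) (x0 : ℝ) {S : Set ℝ}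
    (hS : ∀ y ∈ S, 0 < y) :
    ContinuousOn (fun y : ℝ => F ((x0:ℂ) + (y:ℂ)*I)) S := by
  apply hF.continuousOn.comp
    ((continuous_const.add (Complex.continuous_ofReal.mul continuous_const)).continuousOn)
  intro y hy
  show 0 < ((x0:ℂ) + (y:ℂ)*I).im
  simpa using hS y hy

lemma aux_slice_real {F : ℂ → ℂ} (hF : DifferentiableOn ℂ F UHP) {x0 t T M2 : ℝ}
    (ht : 0 < t) (htT : t ≤ T) (hM2 : 0 ≤ M2)
    (hQ : ∫⁻ y in Ioc t T, (‖F ((x0:ℂ) + (y:ℂ)*I)‖₊ : ℝ≥0∞)^2 ≤ ENNReal.ofReal M2) :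
    ∫ y in t..T, ‖F ((x0:ℂ) + (y:ℂ)*I)‖^2 ≤ M2 := by
  rw [intervalIntegral.integral_of_le htT]
  have hmeas : AEStronglyMeasurable (fun y : ℝ => ‖F ((x0:ℂ) + (y:ℂ)*I)‖^2)
      (volume.restrict (Ioc t T)) := by
    apply ContinuousOn.aestronglyMeasurable ?_ measurableSet_Ioc
    exact ((aux_vline_cont hF x0 (fun y hy => lt_trans ht hy.1)).norm.pow 2)
  rw [integral_eq_lintegral_of_nonneg_ae (ae_of_all _ fun s => by positivity) hmeas]
  apply ENNReal.toReal_le_of_le_ofReal hM2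
  calc ∫⁻ y in Ioc t T, ENNReal.ofReal (‖F ((x0:ℂ) + (y:ℂ)*I)‖^2)
      = ∫⁻ y in Ioc t T, (‖F ((x0:ℂ) + (y:ℂ)*I)‖₊ : ℝ≥0∞)^2 := by
        simp_rw [aux_ofReal_sq]
    _ ≤ ENNReal.ofReal M2 := hQ

set_option maxHeartbeats 2000000 in
/-- Residue identity for Hardy functions: for `F ∈ ℋ²(ℂ₊)` and `t > 0`,
`∫_ℝ F(s+it)/(s − i(t+1))² ds = 2iπ F'(i(2t+1))`, the integral being absolutely convergent. -/
theorem hardy_residue_line_integral (F : ℂ → ℂ) (hF : DifferentiableOn ℂ F UHP)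
    (hH : ∃ M : ℝ, ∀ t : ℝ, 0 < t →
      ∫⁻ s : ℝ, (‖F ((s:ℝ) + (t:ℝ) * Complex.I)‖₊ : ℝ≥0∞)^2 ≤ ENNReal.ofReal M) :
    ∀ t : ℝ, 0 < t →
      Integrable (fun s : ℝ =>
        F ((s:ℝ) + (t:ℝ) * Complex.I) / ((s:ℝ) - ((t:ℝ) + 1) * Complex.I)^2) ∧
      (∫ s : ℝ, F ((s:ℝ) + (t:ℝ) * Complex.I) / ((s:ℝ) - ((t:ℝ) + 1) * Complex.I)^2)
        = 2 * Complex.I * (π : ℝ) * deriv F (Complex.I * (2 * (t:ℝ) + 1)) := by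
  classical
  obtain ⟨M, hM⟩ := hH
  set M' : ℝ := max M 0 with hM'def
  have hM'0 : 0 ≤ M' := le_max_right _ _
  have hb : ∀ y : ℝ, 0 < y →
      ∫⁻ s : ℝ, (‖F ((s:ℂ) + (y:ℂ)*I)‖₊ : ℝ≥0∞)^2 ≤ ENNReal.ofReal M' :=
    fun y hy => le_trans (hM y hy) (ENNReal.ofReal_le_ofReal (le_max_left _ _))
  intro t ht
  set w : ℂ := Complex.I * (2*(t:ℝ)+1) with hw_def
  have hw_re : w.re = 0 := by simp [hw_def]
  have hw_im : w.im = 2*t+1 := by simp [hw_def]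
  have hwUHP : w ∈ UHP := by show 0 < w.im; rw [hw_im]; linarith
  have hident : ∀ s : ℝ, ((s:ℂ) - ((t:ℝ)+1)*Complex.I) = ((s:ℂ) + (t:ℂ)*I - w) := by
    intro s; rw [hw_def]; push_cast; ring
  -- norm formula
  have hGnorm : ∀ x y : ℝ, ‖F ((x:ℂ)+(y:ℂ)*I) / (((x:ℂ)+(y:ℂ)*I) - w)^2‖
      = ‖F ((x:ℂ)+(y:ℂ)*I)‖ * ((x^2+(y-(2*t+1))^2))⁻¹ := by
    intro x y
    rw [norm_div, norm_pow, div_eq_mul_inv]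
    congr 2
    have h2 : ‖((x:ℂ)+(y:ℂ)*I) - w‖^2 = x^2+(y-(2*t+1))^2 := by
      rw [Complex.sq_norm, Complex.normSq_apply]
      simp [hw_def]
      ring
    rw [← h2]
  -- Part A: integrability on the base line
  have hc1 : (0:ℝ) < t+1 := by linarith
  have hker := aux_kernel_integrable hc1
  have hsqt := aux_L2 hF hM'0 hb ht
  have hDint : Integrable (fun s : ℝ =>
      ((s^2+(t+1)^2)⁻¹ * ‖F ((s:ℂ)+(t:ℂ)*I)‖^2 + (s^2+(t+1)^2)⁻¹)/2) := by
    apply Integrable.div_const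
    apply Integrable.add ?_ hker
    apply hsqt.1.bdd_mul (c := (t+1)^(-2 : ℤ))
      ((show Continuous fun s : ℝ => s^2 + (t+1)^2 from (continuous_pow 2).add continuous_const).inv₀ (fun s => by positivity)).aestronglyMeasurable
    refine ae_of_all _ fun s => ?_
    show ‖(s^2 + (t+1)^2)⁻¹‖ ≤ _
    rw [Real.norm_of_nonneg (by positivity : (0:ℝ) ≤ (s^2 + (t+1)^2)⁻¹), zpow_neg, zpow_two]
    apply inv_anti₀ (by positivity)
    nlinarith [sq_nonneg s]
  have hptbound : ∀ x y : ℝ, ‖F ((x:ℂ)+(y:ℂ)*I)‖ * ((x^2+(y-(2*t+1))^2))⁻¹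
      ≤ ((x^2+(y-(2*t+1))^2)⁻¹ * ‖F ((x:ℂ)+(y:ℂ)*I)‖^2 + (x^2+(y-(2*t+1))^2)⁻¹)/2 := by
    intro x y
    have hpos : (0:ℝ) ≤ (x^2+(y-(2*t+1))^2)⁻¹ := by positivity
    nlinarith [sq_nonneg (‖F ((x:ℂ)+(y:ℂ)*I)‖ - 1), norm_nonneg (F ((x:ℂ)+(y:ℂ)*I))]
  have hint : Integrable (fun s : ℝ =>
      F ((s:ℂ) + (t:ℂ)*I) / ((s:ℂ) - ((t:ℝ)+1)*Complex.I)^2) := by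
    apply hDint.mono'
    · apply Continuous.aestronglyMeasurable
      apply (aux_line_cont hF ht).div
        ((Complex.continuous_ofReal.sub continuous_const).pow 2)
      intro s
      apply pow_ne_zero
      intro h
      have := congrArg Complex.im h
      simp at this
      linarith
    · filter_upwards with s
      have e1 : ((s:ℂ) - ((t:ℝ)+1)*Complex.I) = ((s:ℂ)+(t:ℂ)*I) - w := hident s
      rw [e1, hGnorm s t]
      have hb' := hptbound s t
      rw [show ((t:ℝ) - (2*t+1))^2 = (t+1)^2 by ring] at hb' ⊢
      exact hb'
  refine ⟨hint, ?_⟩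

  -- Part B : the contour-limit argument
  set G : ℂ → ℂ := fun z => F z / (z - w)^2 with hG_def
  set g : ℂ → ℂ := dslope (dslope F w) w with hg_def
  have hg_diff : DifferentiableOn ℂ g UHP := by
    rw [hg_def]
    exact (Complex.differentiableOn_dslope (UHP_open.mem_nhds hwUHP)).mpr
      ((Complex.differentiableOn_dslope (UHP_open.mem_nhds hwUHP)).mpr hF)
  have hdecomp : ∀ z : ℂ, z ≠ w →
      G z = g z + F w * ((z-w)^2)⁻¹ + deriv F w * (z-w)⁻¹ := by
    intro z hz
    have hzw : z - w ≠ 0 := sub_ne_zero.2 hz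
    rw [hG_def, hg_def]
    simp only
    rw [dslope_of_ne _ hz, slope_def_field, dslope_of_ne _ hz, slope_def_field, dslope_same]
    field_simp
    ring
  -- choice of the rectangle side positions
  obtain ⟨n₀, hn₀⟩ := exists_nat_gt (2*t+2)
  have hchoice : ∀ n : ℕ, ∃ a b : ℝ, (n₀ ≤ n →
      (a ∈ Icc (-(2*(n:ℝ))) (-(2*(n:ℝ)) + (n:ℝ)) ∧ b ∈ Icc ((n:ℝ)) ((n:ℝ) + (n:ℝ)) ∧
      (∫⁻ y in Ioc t (n:ℝ), (‖F ((a:ℂ) + (y:ℂ)*I)‖₊ : ℝ≥0∞)^2 ≤ ENNReal.ofReal M' + 1) ∧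
      (∫⁻ y in Ioc t (n:ℝ), (‖F ((b:ℂ) + (y:ℂ)*I)‖₊ : ℝ≥0∞)^2 ≤ ENNReal.ofReal M' + 1))) := by
    intro n
    by_cases hn : n₀ ≤ n
    · have hnR : 2*t+2 < (n:ℝ) := lt_of_lt_of_le hn₀ (Nat.cast_le.2 hn)
      have hnpos : (0:ℝ) < (n:ℝ) := by linarith
      have htn : t < (n:ℝ) := by linarith
      have hTL : (n:ℝ) - t ≤ (n:ℝ) := by linarith
      obtain ⟨a, ha, hqa⟩ := aux_exists_slice hF ENNReal.ofReal_ne_top hb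
        (-(2*(n:ℝ))) (n:ℝ) t (n:ℝ) hnpos ht htn hTL
      obtain ⟨b, hb2, hqb⟩ := aux_exists_slice hF ENNReal.ofReal_ne_top hb
        ((n:ℝ)) (n:ℝ) t (n:ℝ) hnpos ht htn hTL
      exact ⟨a, b, fun _ => ⟨ha, hb2, hqa, hqb⟩⟩
    · exact ⟨0, 0, fun h => absurd h hn⟩
  choose aL bR haux using hchoice
  -- the four families of edge integrals
  set bot : ℕ → ℂ := fun n => ∫ x in (aL n)..(bR n), G ((x:ℂ) + (t:ℂ)*I) with hbot_def
  set topI : ℕ → ℂ := fun n => ∫ x in (aL n)..(bR n), G ((x:ℂ) + ((n:ℝ):ℂ)*I) with htop_def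
  set rgt : ℕ → ℂ := fun n => ∫ y in t..(n:ℝ), G (((bR n):ℂ) + (y:ℂ)*I) with hrgt_def
  set lft : ℕ → ℂ := fun n => ∫ y in t..(n:ℝ), G (((aL n):ℂ) + (y:ℂ)*I) with hlft_def
  -- basic facts for n ≥ n₀
  have hfacts : ∀ n : ℕ, n₀ ≤ n →
      aL n ≤ -(n:ℝ) ∧ -(2*(n:ℝ)) ≤ aL n ∧ (n:ℝ) ≤ bR n ∧ bR n ≤ 2*(n:ℝ) ∧ 2*t+2 < (n:ℝ) := by
    intro n hn
    have h := haux n hn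
    have hnR : 2*t+2 < (n:ℝ) := lt_of_lt_of_le hn₀ (Nat.cast_le.2 hn)
    refine ⟨by linarith [h.1.2], h.1.1, h.2.1.1, by linarith [h.2.1.2], hnR⟩
  -- the rectangle identity
  have key : ∀ n : ℕ, n₀ ≤ n →
      bot n = topI n - I * rgt n + I * lft n + deriv F w * (2*(π:ℂ)*I) := by
    intro n hn
    obtain ⟨hA1, hA2, hB1, hB2, hnR⟩ := hfacts n hn
    have hApos : aL n < 0 := by linarith
    have hBpos : 0 < bR n := by linarith
    have htn : t < (n:ℝ) := by linarith
    have htwim : t < w.im := by rw [hw_im]; linarith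
    have hnwim : w.im < (n:ℝ) := by rw [hw_im]; linarith
    -- edge points are in UHP and differ from w
    have hedge_h : ∀ (y : ℝ), 0 < y → y ≠ w.im → ∀ x : ℝ,
        ((x:ℂ) + (y:ℂ)*I) ∈ UHP ∧ ((x:ℂ) + (y:ℂ)*I) ≠ w := by
      intro y hy hyw x
      constructor
      · show 0 < ((x:ℂ) + (y:ℂ)*I).im; simpa using hy
      · intro h; exact hyw (by simpa using congrArg Complex.im h)
    have hedge_v : ∀ (x0 : ℝ), x0 ≠ 0 → ∀ y : ℝ, y ∈ uIcc t (n:ℝ) →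
        (((x0:ℂ)) + (y:ℂ)*I) ∈ UHP ∧ (((x0:ℂ)) + (y:ℂ)*I) ≠ w := by
      intro x0 hx0 y hy
      rw [Set.uIcc_of_le (le_of_lt htn)] at hy
      constructor
      · show 0 < ((x0:ℂ) + (y:ℂ)*I).im; simp; linarith [hy.1]
      · intro h
        have := congrArg Complex.re h
        rw [hw_re] at this
        simp at this
        exact hx0 this
    -- generic decomposition of an edge integral
    have decomp : ∀ (e : ℝ → ℂ) (u v : ℝ), Continuous e →
        (∀ r ∈ uIcc u v, e r ∈ UHP ∧ e r ≠ w) →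
        ∫ r in u..v, G (e r) = (∫ r in u..v, g (e r))
          + F w * (∫ r in u..v, ((e r - w)^2)⁻¹)
          + deriv F w * (∫ r in u..v, (e r - w)⁻¹) := by
      intro e u v hec he
      have h1 : EqOn (fun r => G (e r))
          (fun r => g (e r) + F w * ((e r - w)^2)⁻¹ + deriv F w * (e r - w)⁻¹) (uIcc u v) :=
        fun r hr => hdecomp _ (he r hr).2
      rw [intervalIntegral.integral_congr h1]
      have i1 : IntervalIntegrable (fun r => g (e r)) volume u v :=
        (hg_diff.continuousOn.comp hec.continuousOn (fun r hr => (he r hr).1)).intervalIntegrable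
      have i2 : IntervalIntegrable (fun r => ((e r - w)^2)⁻¹) volume u v :=
        ((((hec.sub continuous_const).pow 2).continuousOn).inv₀
          (fun r hr => pow_ne_zero 2 (sub_ne_zero.2 (he r hr).2))).intervalIntegrable
      have i3 : IntervalIntegrable (fun r => (e r - w)⁻¹) volume u v :=
        (((hec.sub continuous_const).continuousOn).inv₀
          (fun r hr => sub_ne_zero.2 (he r hr).2)).intervalIntegrable
      rw [intervalIntegral.integral_add (i1.add (i2.const_mul _)) (i3.const_mul _),
        intervalIntegral.integral_add i1 (i2.const_mul _),
        intervalIntegral.integral_const_mul, intervalIntegral.integral_const_mul]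
    have ceh : ∀ y : ℝ, Continuous fun u : ℝ => (u:ℂ) + (y:ℂ)*I :=
      fun y => Complex.continuous_ofReal.add continuous_const
    have cev : ∀ x : ℝ, Continuous fun u : ℝ => (x:ℂ) + (u:ℂ)*I :=
      fun x => continuous_const.add (Complex.continuous_ofReal.mul continuous_const)
    have hd_bot := decomp (fun x : ℝ => (x:ℂ) + (t:ℂ)*I) (aL n) (bR n) (ceh t)
      (fun x _ => hedge_h t ht (by rw [hw_im]; intro h; linarith) x)
    have hd_top := decomp (fun x : ℝ => (x:ℂ) + ((n:ℝ):ℂ)*I) (aL n) (bR n) (ceh (n:ℝ))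
      (fun x _ => hedge_h (n:ℝ) (by linarith) (ne_of_gt hnwim) x)
    have hd_rgt := decomp (fun y : ℝ => ((bR n : ℝ):ℂ) + (y:ℂ)*I) t (n:ℝ) (cev (bR n))
      (hedge_v (bR n) (ne_of_gt hBpos))
    have hd_lft := decomp (fun y : ℝ => ((aL n : ℝ):ℂ) + (y:ℂ)*I) t (n:ℝ) (cev (aL n))
      (hedge_v (aL n) (ne_of_lt hApos))
    -- rectangle theorem for g
    have hrect : (∫ x in (aL n)..(bR n), g ((x:ℂ) + (t:ℂ)*I))
        - (∫ x in (aL n)..(bR n), g ((x:ℂ) + ((n:ℝ):ℂ)*I))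
        + I • (∫ y in t..(n:ℝ), g (((bR n):ℂ) + (y:ℂ)*I))
        - I • (∫ y in t..(n:ℝ), g (((aL n):ℂ) + (y:ℂ)*I)) = 0 := by
      apply aux_rect_zero g (aL n) (bR n) t (n:ℝ)
      apply hg_diff.mono
      intro z hz
      rw [Complex.mem_reProdIm] at hz
      have h2 := hz.2
      rw [Set.uIcc_of_le (le_of_lt htn)] at h2
      exact lt_of_lt_of_le ht h2.1
    have hq2 := aux_Sq2 w (aL n) (bR n) t (n:ℝ)
      (by rw [hw_im]; intro h; linarith) (by rw [hw_im]; intro h; linarith)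
      (by rw [hw_re]; exact ne_of_lt hApos) (by rw [hw_re]; exact ne_of_gt hBpos)
    have hq1 := aux_Sq1 w hw_re (aL n) (bR n) t (n:ℝ) hApos hBpos htwim hnwim
    simp only [smul_eq_mul] at hrect hq2 hq1
    rw [hbot_def, htop_def, hrgt_def, hlft_def]
    simp only
    rw [hd_bot, hd_top, hd_rgt, hd_lft]
    linear_combination hrect + F w * hq2 + deriv F w * hq1
  -- limit of the bottom edge
  have hintG : Integrable (fun s : ℝ => G ((s:ℂ) + (t:ℂ)*I)) := by
    apply hint.congr
    filter_upwards with s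
    rw [hG_def]
    simp only
    rw [hident s]
  have htendA : Filter.Tendsto (fun n : ℕ => aL n) Filter.atTop Filter.atBot := by
    have hneg : Filter.Tendsto (fun n : ℕ => -(n:ℝ)) Filter.atTop Filter.atBot :=
      Filter.tendsto_neg_atBot_iff.mpr tendsto_natCast_atTop_atTop
    apply Filter.tendsto_atBot_mono' Filter.atTop ?_ hneg
    filter_upwards [Filter.eventually_atTop.2 ⟨n₀, fun n hn => hn⟩] with n hn
    exact (hfacts n hn).1
  have htendB : Filter.Tendsto (fun n : ℕ => bR n) Filter.atTop Filter.atTop := by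
    apply Filter.tendsto_atTop_mono' Filter.atTop ?_ tendsto_natCast_atTop_atTop
    filter_upwards [Filter.eventually_atTop.2 ⟨n₀, fun n hn => hn⟩] with n hn
    exact (hfacts n hn).2.2.1
  have htend_bot : Filter.Tendsto bot Filter.atTop
      (nhds (∫ s : ℝ, G ((s:ℂ) + (t:ℂ)*I))) := by
    rw [hbot_def]
    exact MeasureTheory.intervalIntegral_tendsto_integral hintG htendA htendB
  -- limit of the top edge
  have htend_top : Filter.Tendsto topI Filter.atTop (nhds 0) := by
    apply squeeze_zero_norm' (a := fun n : ℕ => (M' * (((n:ℝ)-(2*t+1))^2)⁻¹ + π * ((n:ℝ)-(2*t+1))⁻¹)/2)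
    · filter_upwards [Filter.eventually_atTop.2 ⟨n₀, fun n hn => hn⟩] with n hn
      obtain ⟨hA1, hA2, hB1, hB2, hnR⟩ := hfacts n hn
      have hcn : (0:ℝ) < (n:ℝ)-(2*t+1) := by linarith
      have hnpos : (0:ℝ) < (n:ℝ) := by linarith
      have hAB : aL n ≤ bR n := by linarith
      set cn : ℝ := (n:ℝ)-(2*t+1) with hcn_def
      -- pointwise domination on the top edge
      have hptw : ∀ x : ℝ, ‖G ((x:ℂ) + ((n:ℝ):ℂ)*I)‖
          ≤ ((x^2+cn^2)⁻¹ * ‖F ((x:ℂ)+((n:ℝ):ℂ)*I)‖^2 + (x^2+cn^2)⁻¹)/2 := by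
        intro x
        rw [hG_def]
        simp only
        rw [hGnorm x (n:ℝ)]
        exact hptbound x (n:ℝ)
      have hFn2 := (aux_L2 hF hM'0 hb hnpos).1
      have hFn2b := (aux_L2 hF hM'0 hb hnpos).2
      have hprod : Integrable (fun x : ℝ => (x^2+cn^2)⁻¹ * ‖F ((x:ℂ)+((n:ℝ):ℂ)*I)‖^2) := by
        apply hFn2.bdd_mul (c := (cn^2)⁻¹)
          ((show Continuous fun s : ℝ => s^2 + cn^2 from (continuous_pow 2).add continuous_const).inv₀
            (fun s => by positivity)).aestronglyMeasurable
        refine ae_of_all _ fun s => ?_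
        show ‖(s^2 + cn^2)⁻¹‖ ≤ _
        rw [Real.norm_of_nonneg (by positivity : (0:ℝ) ≤ (s^2 + cn^2)⁻¹)]
        apply inv_anti₀ (by positivity)
        nlinarith [sq_nonneg s]
      have hD2 : Integrable (fun x : ℝ =>
          ((x^2+cn^2)⁻¹ * ‖F ((x:ℂ)+((n:ℝ):ℂ)*I)‖^2 + (x^2+cn^2)⁻¹)/2) :=
        (hprod.add (aux_kernel_integrable hcn)).div_const 2
      calc ‖topI n‖ ≤ ∫ x in (aL n)..(bR n), ‖G ((x:ℂ) + ((n:ℝ):ℂ)*I)‖ := by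
            rw [htop_def]; exact intervalIntegral.norm_integral_le_integral_norm hAB
        _ = ∫ x in Ioc (aL n) (bR n), ‖G ((x:ℂ) + ((n:ℝ):ℂ)*I)‖ := by
            rw [intervalIntegral.integral_of_le hAB]
        _ ≤ ∫ x in Ioc (aL n) (bR n),
              ((x^2+cn^2)⁻¹ * ‖F ((x:ℂ)+((n:ℝ):ℂ)*I)‖^2 + (x^2+cn^2)⁻¹)/2 := by
            apply setIntegral_mono_on
            · apply Continuous.integrableOn_Ioc
              exact ((aux_line_cont hF hnpos).div
                (((Complex.continuous_ofReal.add continuous_const :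
                    Continuous fun x : ℝ => (x:ℂ) + ((n:ℝ):ℂ)*I).sub continuous_const).pow 2)
                (fun x => pow_ne_zero 2 (sub_ne_zero.2 (by
                  intro h
                  have := congrArg Complex.im h
                  rw [hw_im] at this
                  simp at this
                  linarith)))).norm
            · exact hD2.integrableOn
            · exact measurableSet_Ioc
            · exact fun x _ => hptw x
        _ ≤ ∫ x : ℝ, ((x^2+cn^2)⁻¹ * ‖F ((x:ℂ)+((n:ℝ):ℂ)*I)‖^2 + (x^2+cn^2)⁻¹)/2 := by
            apply setIntegral_le_integral hD2
            filter_upwards with x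
            simp only [Pi.zero_apply]
            positivity
        _ ≤ (M' * (cn^2)⁻¹ + π * cn⁻¹)/2 := by
            rw [integral_div, integral_add hprod (aux_kernel_integrable hcn)]
            apply div_le_div_of_nonneg_right ?_ (by norm_num)
            have b1 : ∫ x : ℝ, (x^2+cn^2)⁻¹ * ‖F ((x:ℂ)+((n:ℝ):ℂ)*I)‖^2 ≤ M' * (cn^2)⁻¹ := by
              calc ∫ x : ℝ, (x^2+cn^2)⁻¹ * ‖F ((x:ℂ)+((n:ℝ):ℂ)*I)‖^2
                  ≤ ∫ x : ℝ, (cn^2)⁻¹ * ‖F ((x:ℂ)+((n:ℝ):ℂ)*I)‖^2 := by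
                    apply integral_mono hprod (hFn2.const_mul _)
                    intro x
                    apply mul_le_mul_of_nonneg_right ?_ (by positivity)
                    apply inv_anti₀ (by positivity)
                    nlinarith [sq_nonneg x]
                _ = (cn^2)⁻¹ * ∫ x : ℝ, ‖F ((x:ℂ)+((n:ℝ):ℂ)*I)‖^2 :=
                    MeasureTheory.integral_const_mul _ _
                _ ≤ (cn^2)⁻¹ * M' := mul_le_mul_of_nonneg_left hFn2b (by positivity)
                _ = M' * (cn^2)⁻¹ := mul_comm _ _
            have b2 : ∫ x : ℝ, (x^2+cn^2)⁻¹ = π * cn⁻¹ := by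
              rw [aux_kernel_integral hcn, div_eq_mul_inv]
            rw [b2]
            exact add_le_add b1 le_rfl
    · have hc : Filter.Tendsto (fun n : ℕ => (n:ℝ)-(2*t+1)) Filter.atTop Filter.atTop := by
        have := Filter.tendsto_atTop_add_const_right Filter.atTop (-(2*t+1))
          (tendsto_natCast_atTop_atTop (R := ℝ))
        simpa [sub_eq_add_neg] using this
      have h1 : Filter.Tendsto (fun n : ℕ => ((n:ℝ)-(2*t+1))⁻¹) Filter.atTop (nhds 0) :=
        hc.inv_tendsto_atTop
      have h2 : Filter.Tendsto (fun n : ℕ => (((n:ℝ)-(2*t+1))^2)⁻¹) Filter.atTop (nhds 0) := by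
        have := h1.mul h1
        simp only [← mul_inv] at this
        simpa [← sq] using this
      have := ((tendsto_const_nhds (x := M')).mul h2).add
        ((tendsto_const_nhds (x := π)).mul h1)
      have h3 := this.div_const 2
      simpa using h3
  
  -- side edges
  have hside : ∀ (n : ℕ), n₀ ≤ n → ∀ x0 : ℝ, x0 ≠ 0 → ((n:ℝ))^2 ≤ x0^2 →
      (∫⁻ y in Ioc t (n:ℝ), (‖F ((x0:ℂ) + (y:ℂ)*I)‖₊ : ℝ≥0∞)^2 ≤ ENNReal.ofReal M' + 1) →
      ‖∫ y in t..(n:ℝ), G ((x0:ℂ) + (y:ℂ)*I)‖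
        ≤ ((M'+1) + (n:ℝ)) * (((n:ℝ))^2)⁻¹ / 2 := by
    intro n hn x0 hx0 hx02 hslice
    obtain ⟨hA1, hA2, hB1, hB2, hnR⟩ := hfacts n hn
    have hnpos : (0:ℝ) < (n:ℝ) := by linarith
    have htn : t ≤ (n:ℝ) := by linarith
    have hSpos : ∀ y ∈ uIcc t (n:ℝ), 0 < y := by
      intro y hy
      rw [Set.uIcc_of_le htn] at hy
      linarith [hy.1]
    have hcont1 : ContinuousOn (fun y : ℝ => F ((x0:ℂ) + (y:ℂ)*I)) (uIcc t (n:ℝ)) :=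
      aux_vline_cont hF x0 hSpos
    have hdenom : ∀ y : ℝ, (((x0:ℂ) + (y:ℂ)*I - w)^2) ≠ 0 := by
      intro y
      apply pow_ne_zero
      apply sub_ne_zero.2
      intro h
      have := congrArg Complex.re h
      rw [hw_re] at this
      simp at this
      exact hx0 this
    have hGcont : ContinuousOn (fun y : ℝ => G ((x0:ℂ) + (y:ℂ)*I)) (uIcc t (n:ℝ)) := by
      rw [hG_def]
      exact hcont1.div
        ((((continuous_const.add (Complex.continuous_ofReal.mul continuous_const)).sub
          continuous_const).pow 2).continuousOn) (fun y _ => hdenom y)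
    have hq : ∫ y in t..(n:ℝ), ‖F ((x0:ℂ) + (y:ℂ)*I)‖^2 ≤ M'+1 := by
      apply aux_slice_real hF ht htn (by linarith)
      rw [ENNReal.ofReal_add hM'0 zero_le_one, ENNReal.ofReal_one]
      exact hslice
    have hIsq : IntervalIntegrable (fun y : ℝ => ‖F ((x0:ℂ) + (y:ℂ)*I)‖^2) volume t (n:ℝ) :=
      ((hcont1.norm.pow 2)).intervalIntegrable
    calc ‖∫ y in t..(n:ℝ), G ((x0:ℂ) + (y:ℂ)*I)‖
        ≤ ∫ y in t..(n:ℝ), ‖G ((x0:ℂ) + (y:ℂ)*I)‖ :=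
          intervalIntegral.norm_integral_le_integral_norm htn
      _ ≤ ∫ y in t..(n:ℝ), (‖F ((x0:ℂ) + (y:ℂ)*I)‖^2 + 1) * (((n:ℝ))^2)⁻¹ / 2 := by
          apply intervalIntegral.integral_mono_on htn (hGcont.norm.intervalIntegrable)
          · exact (((hIsq.add (intervalIntegrable_const)).mul_const _).div_const _)
          · intro y hy
            have e1 : ‖G ((x0:ℂ) + (y:ℂ)*I)‖
                = ‖F ((x0:ℂ)+(y:ℂ)*I)‖ * ((x0^2+(y-(2*t+1))^2))⁻¹ := by
              rw [hG_def]; simp only; exact hGnorm x0 y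
            rw [e1]
            have hd : (x0^2+(y-(2*t+1))^2)⁻¹ ≤ (((n:ℝ))^2)⁻¹ := by
              apply inv_anti₀ (by positivity)
              nlinarith [sq_nonneg (y-(2*t+1))]
            have hr0 : (0:ℝ) ≤ ‖F ((x0:ℂ)+(y:ℂ)*I)‖ := norm_nonneg _
            have hi0 : (0:ℝ) ≤ (((n:ℝ))^2)⁻¹ := by positivity
            have hi0' : (0:ℝ) ≤ (x0^2+(y-(2*t+1))^2)⁻¹ := by positivity
            nlinarith [sq_nonneg (‖F ((x0:ℂ)+(y:ℂ)*I)‖ - 1),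
              mul_le_mul_of_nonneg_left hd hr0]
      _ = ((∫ y in t..(n:ℝ), ‖F ((x0:ℂ) + (y:ℂ)*I)‖^2) + ((n:ℝ) - t)) * (((n:ℝ))^2)⁻¹ / 2 := by
          rw [intervalIntegral.integral_div, intervalIntegral.integral_mul_const,
            intervalIntegral.integral_add hIsq intervalIntegrable_const,
            intervalIntegral.integral_const]
          simp [smul_eq_mul]
      _ ≤ ((M'+1) + (n:ℝ)) * (((n:ℝ))^2)⁻¹ / 2 := by
          apply div_le_div_of_nonneg_right ?_ (by norm_num)
          apply mul_le_mul_of_nonneg_right ?_ (by positivity)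
          have : (n:ℝ) - t ≤ (n:ℝ) := by linarith
          linarith [hq]
  -- the common squeeze bound tends to zero
  have hvlim : Filter.Tendsto (fun n : ℕ => ((M'+1) + (n:ℝ)) * (((n:ℝ))^2)⁻¹ / 2)
      Filter.atTop (nhds 0) := by
    have hcast := tendsto_natCast_atTop_atTop (R := ℝ)
    have hsq : Filter.Tendsto (fun n : ℕ => ((n:ℝ))^2) Filter.atTop Filter.atTop := by
      have := hcast.atTop_mul_atTop₀ hcast
      simpa [sq] using this
    have hinv2 : Filter.Tendsto (fun n : ℕ => (((n:ℝ))^2)⁻¹) Filter.atTop (nhds 0) :=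
      hsq.inv_tendsto_atTop
    have hinv1 : Filter.Tendsto (fun n : ℕ => ((n:ℝ))⁻¹) Filter.atTop (nhds 0) :=
      hcast.inv_tendsto_atTop
    have hmain : Filter.Tendsto (fun n : ℕ => ((M'+1) * (((n:ℝ))^2)⁻¹ + ((n:ℝ))⁻¹) / 2)
        Filter.atTop (nhds 0) := by
      have := ((tendsto_const_nhds (x := M'+1)).mul hinv2).add hinv1
      have h3 := this.div_const 2
      simpa using h3
    apply hmain.congr'
    filter_upwards [Filter.eventually_atTop.2 ⟨1, fun n hn => hn⟩] with n hn
    have hn1 : (1:ℝ) ≤ (n:ℝ) := by exact_mod_cast hn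
    have hnne : ((n:ℝ)) ≠ 0 := by linarith
    field_simp
  have htend_rgt : Filter.Tendsto rgt Filter.atTop (nhds 0) := by
    apply squeeze_zero_norm' (a := fun n : ℕ => ((M'+1) + (n:ℝ)) * (((n:ℝ))^2)⁻¹ / 2) ?_ hvlim
    filter_upwards [Filter.eventually_atTop.2 ⟨n₀, fun n hn => hn⟩] with n hn
    obtain ⟨hA1, hA2, hB1, hB2, hnR⟩ := hfacts n hn
    apply hside n hn (bR n) (by intro h; rw [h] at hB1; linarith) (by nlinarith)
    exact (haux n hn).2.2.2
  have htend_lft : Filter.Tendsto lft Filter.atTop (nhds 0) := by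
    apply squeeze_zero_norm' (a := fun n : ℕ => ((M'+1) + (n:ℝ)) * (((n:ℝ))^2)⁻¹ / 2) ?_ hvlim
    filter_upwards [Filter.eventually_atTop.2 ⟨n₀, fun n hn => hn⟩] with n hn
    obtain ⟨hA1, hA2, hB1, hB2, hnR⟩ := hfacts n hn
    apply hside n hn (aL n) (by intro h; rw [h] at hA1; linarith) (by nlinarith)
    exact (haux n hn).2.2.1
  -- assemble
  have hRHS : Filter.Tendsto
      (fun n : ℕ => topI n - I * rgt n + I * lft n + deriv F w * (2*(π:ℂ)*I))
      Filter.atTop (nhds (deriv F w * (2*(π:ℂ)*I))) := by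
    have := ((htend_top.sub ((tendsto_const_nhds (x := I)).mul htend_rgt)).add
      ((tendsto_const_nhds (x := I)).mul htend_lft)).add
      (tendsto_const_nhds (x := deriv F w * (2*(π:ℂ)*I)))
    simpa using this
  have htend_bot' : Filter.Tendsto bot Filter.atTop (nhds (deriv F w * (2*(π:ℂ)*I))) := by
    apply hRHS.congr'
    filter_upwards [Filter.eventually_atTop.2 ⟨n₀, fun n hn => hn⟩] with n hn
    exact (key n hn).symm
  have hfinal : (∫ s : ℝ, G ((s:ℂ) + (t:ℂ)*I)) = deriv F w * (2*(π:ℂ)*I) :=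
    tendsto_nhds_unique htend_bot htend_bot'
  have heq : (fun s : ℝ => F ((s:ℂ) + (t:ℂ)*I) / ((s:ℂ) - ((t:ℝ)+1)*Complex.I)^2)
      = fun s : ℝ => G ((s:ℂ) + (t:ℂ)*I) := by
    funext s
    rw [hG_def]
    simp only
    rw [hident s]
  rw [show (fun s : ℝ => F ((s:ℝ) + (t:ℝ) * Complex.I) / ((s:ℝ) - ((t:ℝ) + 1) * Complex.I)^2)
      = fun s : ℝ => G ((s:ℂ) + (t:ℂ)*I) from heq]
  rw [hfinal]
  ring
end

section
/- Let p ∈ (1,∞). There exists a constant C > 0 such that for every F ∈ L¹(ℂ₊,ℂ) ∩ L^p(ℂ₊,ℂ), the function G(z) := −(1/π) ∫_{ℂ₊} F(w)/( z − conj(w) )² dλ(w) (absolutely convergent for z ∈ ℂ₊) satisfies ‖G‖_{L^p(ℂ₊)} ≤ C ‖F‖_{L^p(ℂ₊)}. -/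
open MeasureTheory Complex Real Set
open scoped ENNReal NNReal

/-- The Bergman projection on the upper half-plane:
`(P₀F)(z) = −(1/π) ∫_{ℂ₊} F(w)/(z − conj w)² dλ(w)`. -/
noncomputable def bergman (F : ℂ → ℂ) (z : ℂ) : ℂ :=
  -(((1 / π : ℝ)) : ℂ) * ∫ w in UHP, F w / (z - (starRingEnd ℂ) w)^2

lemma poisson_integrable {d : ℝ} (hd : 0 < d) (x : ℝ) :
    Integrable (fun u : ℝ => ((x - u) ^ 2 + d ^ 2)⁻¹) := by
  have key : ∀ u : ℝ, ((x - u) ^ 2 + d ^ 2)⁻¹ = d⁻¹ * d⁻¹ * (1 + ((u - x) / d) ^ 2)⁻¹ := by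
    intro u
    have hd2 : (d:ℝ)^2 ≠ 0 := pow_ne_zero 2 hd.ne'
    rw [div_pow]
    rw [show (1 + (u - x) ^ 2 / d ^ 2) = ((x-u)^2 + d^2)/d^2 by field_simp; ring]
    field_simp
  simp_rw [key]
  exact ((integrable_inv_one_add_sq.comp_div (hd.ne')).comp_sub_right x).const_mul _

lemma poisson_value {d : ℝ} (hd : 0 < d) (x : ℝ) :
    ∫ u : ℝ, ((x - u) ^ 2 + d ^ 2)⁻¹ = π / d := by
  have key : ∀ u : ℝ, ((x - u) ^ 2 + d ^ 2)⁻¹ = d⁻¹ * d⁻¹ * (1 + ((u - x) / d) ^ 2)⁻¹ := by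
    intro u
    have hd2 : (d:ℝ)^2 ≠ 0 := pow_ne_zero 2 hd.ne'
    rw [div_pow]
    rw [show (1 + (u - x) ^ 2 / d ^ 2) = ((x-u)^2 + d^2)/d^2 by field_simp; ring]
    field_simp
  simp_rw [key]
  rw [MeasureTheory.integral_const_mul]
  rw [integral_sub_right_eq_self (fun u : ℝ => (1 + (u / d) ^ 2)⁻¹) x]
  rw [MeasureTheory.Measure.integral_comp_div (fun u : ℝ => (1 + u ^ 2)⁻¹) d]
  rw [integral_univ_inv_one_add_sq, abs_of_pos hd]
  rw [smul_eq_mul]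
  field_simp

noncomputable def Ic (α : ℝ) : ℝ := ∫ t in Ioi (0:ℝ), t ^ (-α) / (1 + t)

lemma beta_continuousOn (α : ℝ) :
    ContinuousOn (fun t : ℝ => t ^ (-α) / (1 + t)) (Ioi 0) := by
  apply ContinuousOn.div
  · exact fun t ht => (Real.continuousAt_rpow_const t (-α) (Or.inl (ne_of_gt ht))).continuousWithinAt
  · exact (continuous_const.add continuous_id).continuousOn
  · intro t ht
    have : (0:ℝ) < t := ht
    positivity

lemma beta_integrable {α : ℝ} (h0 : 0 < α) (h1 : α < 1) :
    IntegrableOn (fun t : ℝ => t ^ (-α) / (1 + t)) (Ioi 0) := by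
  rw [← Ioc_union_Ioi_eq_Ioi (zero_le_one (α := ℝ))]
  apply IntegrableOn.union
  · -- on Ioc 0 1, bound by t ^ (-α)
    have hbase : IntegrableOn (fun t : ℝ => t ^ (-α)) (Ioc (0:ℝ) 1) := by
      have := intervalIntegral.integrableOn_Ioo_rpow_iff (s := -α) (t := (1:ℝ)) zero_lt_one
      have h2 : IntegrableOn (fun t : ℝ => t ^ (-α)) (Ioo (0:ℝ) 1) := this.mpr (by linarith)
      rwa [IntegrableOn, ← Measure.restrict_congr_set Ioo_ae_eq_Ioc]
    refine Integrable.mono' hbase ?_ ?_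
    · exact ((beta_continuousOn α).mono Ioc_subset_Ioi_self).aestronglyMeasurable measurableSet_Ioc
    · filter_upwards [ae_restrict_mem measurableSet_Ioc] with t ht
      have htp : (0:ℝ) < t := ht.1
      rw [Real.norm_of_nonneg (div_nonneg (Real.rpow_nonneg htp.le _) (by linarith))]
      apply div_le_self (Real.rpow_nonneg htp.le _)
      linarith
  · -- on Ioi 1, bound by t ^ (-α - 1)
    have hbase : IntegrableOn (fun t : ℝ => t ^ (-α - 1)) (Ioi (1:ℝ)) :=
      integrableOn_Ioi_rpow_of_lt (by linarith) zero_lt_one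
    refine Integrable.mono' hbase ?_ ?_
    · exact ((beta_continuousOn α).mono fun t (ht : t ∈ Ioi (1:ℝ)) => (lt_trans zero_lt_one ht : (0:ℝ) < t)).aestronglyMeasurable
        measurableSet_Ioi
    · filter_upwards [ae_restrict_mem measurableSet_Ioi] with t ht
      have ht0 : (0:ℝ) < t := lt_trans zero_lt_one ht
      rw [Real.norm_of_nonneg (div_nonneg (Real.rpow_nonneg ht0.le _) (by linarith))]
      rw [Real.rpow_sub ht0, Real.rpow_one, div_le_div_iff₀ (by linarith) (by positivity)]
      have : t ^ (-α) * t ≤ t ^ (-α) * (1 + t) := by nlinarith [Real.rpow_nonneg ht0.le (-α)]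
      linarith [this]

lemma comp_eq {α y : ℝ} (hy : 0 < y) :
    ∀ t ∈ Ioi (0:ℝ), (y * t) ^ (-α) / (y + y * t) = (y ^ (-α) * y⁻¹) * (t ^ (-α) / (1 + t)) := by
  intro t ht
  have ht0 : (0:ℝ) < t := ht
  rw [Real.mul_rpow hy.le ht0.le, show y + y * t = y * (1 + t) by ring]
  field_simp

lemma outer_integrable {α y : ℝ} (h0 : 0 < α) (h1 : α < 1) (hy : 0 < y) :
    IntegrableOn (fun v : ℝ => v ^ (-α) / (y + v)) (Ioi 0) := by
  have hiff := integrableOn_Ioi_comp_mul_left_iff (fun v : ℝ => v ^ (-α) / (y + v)) 0 hy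
  rw [mul_zero] at hiff
  rw [← hiff]
  exact IntegrableOn.congr_fun ((beta_integrable h0 h1).const_mul (y ^ (-α) * y⁻¹))
    (fun t ht => (comp_eq hy t ht).symm) measurableSet_Ioi

lemma outer_value {α y : ℝ} (h0 : 0 < α) (h1 : α < 1) (hy : 0 < y) :
    ∫ v in Ioi (0:ℝ), v ^ (-α) / (y + v) = y ^ (-α) * Ic α := by
  have h := integral_comp_mul_left_Ioi (fun v : ℝ => v ^ (-α) / (y + v)) 0 hy
  rw [mul_zero] at h
  have h2 : ∫ t in Ioi (0:ℝ), (y * t) ^ (-α) / (y + y * t)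
      = (y ^ (-α) * y⁻¹) * Ic α := by
    rw [setIntegral_congr_fun measurableSet_Ioi (comp_eq hy)]
    rw [MeasureTheory.integral_const_mul]
    rfl
  rw [h2] at h
  have hy' : y ≠ 0 := hy.ne'
  have := congrArg (fun r => y * r) h
  simp only [smul_eq_mul] at this
  rw [mul_comm (y ^ (-α)) y⁻¹, ← mul_assoc, ← mul_assoc, mul_inv_cancel₀ hy', one_mul,
    ← mul_assoc, mul_inv_cancel₀ hy', one_mul] at this
  exact this.symm

noncomputable def Kf (z w : ℂ) : ℝ := π⁻¹ / ((z.re - w.re) ^ 2 + (z.im + w.im) ^ 2)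

/-- `w.im ^ γ` for `w` in the upper half plane, written so as to be globally measurable and
positive. -/
noncomputable def pw (γ : ℝ) (w : ℂ) : ℝ := Real.exp (Real.log w.im * γ)

lemma pw_pos (γ : ℝ) (w : ℂ) : 0 < pw γ w := Real.exp_pos _

lemma pw_eq {w : ℂ} (hw : 0 < w.im) (γ : ℝ) : pw γ w = w.im ^ γ :=
  (Real.rpow_def_of_pos hw γ).symm

lemma measurable_pw (γ : ℝ) : Measurable (pw γ) :=
  (((Real.measurable_log).comp Complex.measurable_im).mul_const γ).exp

lemma pw_mul_pw_neg (γ : ℝ) (w : ℂ) : pw γ w * pw (-γ) w = 1 := by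
  unfold pw
  rw [← Real.exp_add]
  ring_nf
  exact Real.exp_zero

lemma pw_rpow (γ c : ℝ) (w : ℂ) : (pw γ w) ^ c = pw (γ * c) w := by
  unfold pw
  rw [Real.rpow_def_of_pos (Real.exp_pos _), Real.log_exp, mul_assoc]

lemma Kf_nonneg (z w : ℂ) : 0 ≤ Kf z w := by
  unfold Kf
  positivity

lemma Kf_symm (z w : ℂ) : Kf z w = Kf w z := by
  unfold Kf
  ring_nf

lemma measurable_Kf : Measurable (fun p : ℂ × ℂ => Kf p.1 p.2) := by
  unfold Kf
  fun_prop

lemma measurableSet_UHP : MeasurableSet UHP :=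
  measurableSet_lt measurable_const Complex.measurable_im

lemma schur_bound {α : ℝ} (h0 : 0 < α) (h1 : α < 1) {z : ℂ} (hz : 0 < z.im) :
    ∫⁻ w in UHP, ENNReal.ofReal (Kf z w) * ENNReal.ofReal (pw (-α) w) ∂volume
      ≤ ENNReal.ofReal (Ic α) * ENNReal.ofReal (pw (-α) z) := by
  have hcomb : ∀ w : ℂ, ENNReal.ofReal (Kf z w) * ENNReal.ofReal (pw (-α) w)
      = ENNReal.ofReal (Kf z w * pw (-α) w) := fun w =>
    (ENNReal.ofReal_mul (Kf_nonneg z w)).symm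
  simp_rw [hcomb]
  -- transfer to ℝ × ℝ
  set φ : ℝ × ℝ → ℂ := ⇑Complex.measurableEquivRealProd.symm with hφ
  have hmp : MeasurePreserving φ volume volume :=
    Complex.volume_preserving_equiv_real_prod.symm
  have hemb : MeasurableEmbedding φ :=
    Complex.measurableEquivRealProd.symm.measurableEmbedding
  have himg : φ '' (univ ×ˢ Ioi (0:ℝ)) = UHP := by
    ext w
    constructor
    · rintro ⟨p, hp, rfl⟩
      exact hp.2
    · intro hw
      refine ⟨(w.re, w.im), ⟨trivial, hw⟩, ?_⟩
      apply Complex.ext <;> rfl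
  have hF : Measurable (fun w : ℂ => ENNReal.ofReal (Kf z w * pw (-α) w)) := by
    apply Measurable.ennreal_ofReal
    exact (measurable_Kf.comp (measurable_const.prodMk measurable_id)).mul (measurable_pw _)
  have step1 : ∫⁻ w in UHP, ENNReal.ofReal (Kf z w * pw (-α) w) ∂volume
      = ∫⁻ p in univ ×ˢ Ioi (0:ℝ),
          ENNReal.ofReal (Kf z (φ p) * pw (-α) (φ p)) ∂volume := by
    have := hmp.setLIntegral_comp_emb hemb
      (fun w : ℂ => ENNReal.ofReal (Kf z w * pw (-α) w)) (univ ×ˢ Ioi (0:ℝ))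
    rw [himg] at this
    exact this.symm
  rw [step1]
  have step2 : (volume : Measure (ℝ × ℝ)).restrict (univ ×ˢ Ioi (0:ℝ))
      = (volume : Measure ℝ).prod ((volume : Measure ℝ).restrict (Ioi 0)) := by
    rw [MeasureTheory.Measure.volume_eq_prod, ← Measure.prod_restrict, Measure.restrict_univ]
  rw [step2]
  have hF2 : Measurable (fun p : ℝ × ℝ => ENNReal.ofReal (Kf z (φ p) * pw (-α) (φ p))) :=
    hF.comp hemb.measurable
  rw [lintegral_prod_symm _ hF2.aemeasurable]
  -- inner integral
  have hval : ∀ v ∈ Ioi (0:ℝ),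
      (∫⁻ u : ℝ, ENNReal.ofReal (Kf z (φ (u, v)) * pw (-α) (φ (u, v))) ∂volume)
        = ENNReal.ofReal (v ^ (-α) / (z.im + v)) := by
    intro v hv
    have hv0 : (0:ℝ) < v := hv
    have hd : (0:ℝ) < z.im + v := by linarith
    have heq : ∀ u : ℝ, Kf z (φ (u, v)) * pw (-α) (φ (u, v))
        = (π⁻¹ * v ^ (-α)) * ((z.re - u) ^ 2 + (z.im + v) ^ 2)⁻¹ := by
      intro u
      have h1 : (φ (u, v)).re = u := rfl
      have h2 : (φ (u, v)).im = v := rfl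
      unfold Kf
      rw [pw_eq (show (0:ℝ) < (φ (u, v)).im from hv0), h1, h2]
      rw [div_eq_mul_inv]
      ring
    simp_rw [heq]
    rw [← ofReal_integral_eq_lintegral_ofReal
      (((poisson_integrable hd z.re)).const_mul _)
      (ae_of_all _ fun u => by positivity)]
    rw [MeasureTheory.integral_const_mul, poisson_value hd z.re]
    congr 1
    field_simp
  rw [setLIntegral_congr_fun measurableSet_Ioi hval]
  rw [← ofReal_integral_eq_lintegral_ofReal (outer_integrable h0 h1 hz)]
  · rw [outer_value h0 h1 hz, ENNReal.ofReal_mul (Real.rpow_nonneg hz.le _), mul_comm,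
      pw_eq hz]
  · filter_upwards [ae_restrict_mem measurableSet_Ioi] with v hv
    have hv0 : (0:ℝ) < v := hv
    have : (0:ℝ) < z.im + v := by linarith
    positivity

noncomputable def K (z w : ℂ) : ℝ≥0∞ := ENNReal.ofReal (Kf z w)

lemma schur_bound' {α : ℝ} (h0 : 0 < α) (h1 : α < 1) {z : ℂ} (hz : 0 < z.im) :
    ∫⁻ w in UHP, K z w * ENNReal.ofReal (pw (-α) w) ∂volume
      ≤ ENNReal.ofReal (Ic α) * ENNReal.ofReal (pw (-α) z) :=
  schur_bound h0 h1 hz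

lemma Ic_nonneg (α : ℝ) : 0 ≤ Ic α := by
  apply setIntegral_nonneg measurableSet_Ioi
  intro t ht
  have ht0 : (0:ℝ) < t := ht
  positivity

lemma measurable_K_pair : Measurable (fun pr : ℂ × ℂ => K pr.1 pr.2) :=
  measurable_Kf.ennreal_ofReal

lemma measurable_K_left (z : ℂ) : Measurable (K z) :=
  (measurable_Kf.comp (measurable_const.prodMk measurable_id)).ennreal_ofReal

lemma measurable_K_right (w : ℂ) : Measurable (fun z => K z w) :=
  (measurable_Kf.comp (measurable_id.prodMk measurable_const)).ennreal_ofReal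

lemma K_symm (z w : ℂ) : K z w = K w z := by unfold K; rw [Kf_symm]

lemma norm_sq_sub_conj (z w : ℂ) :
    ‖z - (starRingEnd ℂ) w‖ ^ 2 = (z.re - w.re) ^ 2 + (z.im + w.im) ^ 2 := by
  rw [Complex.sq_norm, Complex.normSq_apply]
  simp [Complex.sub_re, Complex.sub_im, Complex.conj_re, Complex.conj_im]
  ring

lemma kernel_norm_eq (F : ℂ → ℂ) (z w : ℂ) :
    ENNReal.ofReal π⁻¹ * (‖F w / (z - (starRingEnd ℂ) w) ^ 2‖₊ : ℝ≥0∞)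
      = K z w * (‖F w‖₊ : ℝ≥0∞) := by
  rw [← enorm_eq_nnnorm, ← enorm_eq_nnnorm, ← ofReal_norm, ← ofReal_norm]
  unfold K
  rw [← ENNReal.ofReal_mul (by positivity), ← ENNReal.ofReal_mul (Kf_nonneg z w)]
  congr 1
  rw [norm_div, norm_pow, norm_sq_sub_conj]
  unfold Kf
  ring

lemma enorm_bergman_le (F : ℂ → ℂ) (z : ℂ) :
    (‖bergman F z‖₊ : ℝ≥0∞) ≤ ∫⁻ w in UHP, K z w * (‖F w‖₊ : ℝ≥0∞) ∂volume := by
  have h1 : (‖bergman F z‖₊ : ℝ≥0∞)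
      = ENNReal.ofReal π⁻¹ * (‖∫ w in UHP, F w / (z - (starRingEnd ℂ) w) ^ 2‖₊ : ℝ≥0∞) := by
    rw [← enorm_eq_nnnorm, ← enorm_eq_nnnorm, ← ofReal_norm, ← ofReal_norm]
    unfold bergman
    rw [norm_mul, norm_neg, Complex.norm_real, Real.norm_of_nonneg (by positivity),
      ENNReal.ofReal_mul (by positivity), one_div]
  rw [h1]
  calc ENNReal.ofReal π⁻¹ * (‖∫ w in UHP, F w / (z - (starRingEnd ℂ) w) ^ 2‖₊ : ℝ≥0∞)
      ≤ ENNReal.ofReal π⁻¹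
        * ∫⁻ w in UHP, (‖F w / (z - (starRingEnd ℂ) w) ^ 2‖₊ : ℝ≥0∞) ∂volume :=
        mul_le_mul_right (enorm_integral_le_lintegral_enorm _) _
    _ = ∫⁻ w in UHP, ENNReal.ofReal π⁻¹
          * (‖F w / (z - (starRingEnd ℂ) w) ^ 2‖₊ : ℝ≥0∞) ∂volume :=
        (lintegral_const_mul' _ _ ENNReal.ofReal_ne_top).symm
    _ = ∫⁻ w in UHP, K z w * (‖F w‖₊ : ℝ≥0∞) ∂volume :=
        lintegral_congr fun w => kernel_norm_eq F z w

/-- `L^p`-boundedness of the Bergman projection for `p ∈ (1,∞)`. -/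
theorem bergman_projection_Lp_bounded (p : ℝ) (hp : 1 < p) :
    ∃ C > (0:ℝ), ∀ F : ℂ → ℂ,
      MemLp F 1 (volume.restrict UHP) →
      MemLp F (ENNReal.ofReal p) (volume.restrict UHP) →
      eLpNorm (bergman F) (ENNReal.ofReal p) (volume.restrict UHP)
        ≤ ENNReal.ofReal C * eLpNorm F (ENNReal.ofReal p) (volume.restrict UHP) := by
  have hpq : p.HolderConjugate (p / (p - 1)) := Real.HolderConjugate.conjExponent hp
  set q : ℝ := p / (p - 1) with hq_def
  have hp0 : (0:ℝ) < p := hpq.pos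
  have hq1 : 1 < q := hpq.symm.lt
  have hq0 : (0:ℝ) < q := hpq.symm.pos
  have hinv : p⁻¹ + q⁻¹ = 1 := hpq.inv_add_inv_eq_one
  have hip0 : 0 < p⁻¹ := by positivity
  have hip1 : p⁻¹ < 1 := by
    rw [inv_lt_one_iff₀]; right; exact hp
  have hiq0 : 0 < q⁻¹ := by positivity
  have hiq1 : q⁻¹ < 1 := by
    rw [inv_lt_one_iff₀]; right; exact hq1
  set I₁ : ℝ := Ic p⁻¹ with hI₁def
  set I₂ : ℝ := Ic q⁻¹ with hI₂def
  set C : ℝ := max I₁ I₂ + 1 with hCdef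
  have hI₁0 : 0 ≤ I₁ := Ic_nonneg _
  have hI₂0 : 0 ≤ I₂ := Ic_nonneg _
  have hC0 : 0 < C := by
    have := le_trans hI₁0 (le_max_left I₁ I₂)
    linarith
  refine ⟨C, hC0, ?_⟩
  intro F _hF1 hFp
  set μ : Measure ℂ := volume.restrict UHP with hμdef
  set P : ℝ≥0∞ := ENNReal.ofReal p with hPdef
  have hP0 : P ≠ 0 := by
    simp [hPdef, ENNReal.ofReal_eq_zero]; linarith
  have hPtop : P ≠ ⊤ := ENNReal.ofReal_ne_top
  have hPto : P.toReal = p := ENNReal.toReal_ofReal hp0.le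
  -- measurable version of the norm of F
  have hA : AEMeasurable (fun w => (‖F w‖₊ : ℝ≥0∞)) μ := hFp.aestronglyMeasurable.enorm
  set G : ℂ → ℝ≥0∞ := hA.mk _ with hGdef
  have hG : Measurable G := hA.measurable_mk
  have hAG : (fun w => (‖F w‖₊ : ℝ≥0∞)) =ᵐ[μ] G := hA.ae_eq_mk
  set g : ℂ → ℝ≥0∞ := fun z => ∫⁻ w in UHP, K z w * G w ∂volume with hgdef
  set T : ℂ → ℝ≥0∞ :=
    fun z => ∫⁻ w in UHP, K z w * (G w ^ p * ENNReal.ofReal (pw q⁻¹ w)) ∂volume with hTdef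
  -- pointwise bound by g
  have hptw : ∀ z : ℂ, (‖bergman F z‖₊ : ℝ≥0∞) ≤ g z := by
    intro z
    refine le_trans (enorm_bergman_le F z) (le_of_eq ?_)
    refine lintegral_congr_ae ?_
    filter_upwards [hAG] with w hw
    rw [hw]
  -- Hölder step
  have holder : ∀ z : ℂ, 0 < z.im →
      g z ≤ (ENNReal.ofReal I₁ * ENNReal.ofReal (pw (-p⁻¹) z)) ^ (1/q) * (T z) ^ (1/p) := by
    intro z hz
    set s : ℝ := (p * q)⁻¹ with hsdef
    have hs_q : -s * q = -p⁻¹ := by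
      rw [hsdef, mul_inv, neg_mul, mul_assoc, inv_mul_cancel₀ hq0.ne', mul_one]
    have hs_p : s * p = q⁻¹ := by
      rw [hsdef, mul_inv, mul_comm p⁻¹ q⁻¹, mul_assoc, inv_mul_cancel₀ hp0.ne', mul_one]
    set f₁ : ℂ → ℝ≥0∞ := fun w => (K z w) ^ (1/q) * ENNReal.ofReal (pw (-s) w) with hf₁def
    set f₂ : ℂ → ℝ≥0∞ := fun w => (K z w) ^ (1/p) * (G w * ENNReal.ofReal (pw s w)) with hf₂def
    have hmul : ∀ w, f₁ w * f₂ w = K z w * G w := by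
      intro w
      have h1 : (K z w) ^ (1/q) * (K z w) ^ (1/p) = K z w := by
        rw [← ENNReal.rpow_add_of_nonneg _ _ (by positivity) (by positivity)]
        rw [show 1/q + 1/p = 1 by rw [one_div, one_div, add_comm]; exact hinv]
        exact ENNReal.rpow_one _
      have h2 : ENNReal.ofReal (pw (-s) w) * ENNReal.ofReal (pw s w) = 1 := by
        rw [← ENNReal.ofReal_mul (pw_pos _ _).le, mul_comm, pw_mul_pw_neg, ENNReal.ofReal_one]
      calc f₁ w * f₂ w
          = ((K z w) ^ (1/q) * (K z w) ^ (1/p))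
            * (ENNReal.ofReal (pw (-s) w) * ENNReal.ofReal (pw s w)) * G w := by
            rw [hf₁def, hf₂def]; ring
        _ = K z w * G w := by rw [h1, h2, mul_one]
    have hf₁m : AEMeasurable f₁ μ :=
      (((measurable_K_left z).pow_const _).mul (measurable_pw _).ennreal_ofReal).aemeasurable
    have hf₂m : AEMeasurable f₂ μ :=
      (((measurable_K_left z).pow_const _).mul
        (hG.mul (measurable_pw _).ennreal_ofReal)).aemeasurable
    have hHold := ENNReal.lintegral_mul_le_Lp_mul_Lq μ hpq.symm hf₁m hf₂m
    have hgz : g z = ∫⁻ w, (f₁ * f₂) w ∂μ := by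
      rw [hgdef]
      refine lintegral_congr fun w => ?_
      rw [Pi.mul_apply, hmul]
    have hf1q : ∀ w, f₁ w ^ q = K z w * ENNReal.ofReal (pw (-p⁻¹) w) := by
      intro w
      rw [hf₁def]
      rw [ENNReal.mul_rpow_of_nonneg _ _ hq0.le, ← ENNReal.rpow_mul,
        one_div_mul_cancel hq0.ne', ENNReal.rpow_one,
        ENNReal.ofReal_rpow_of_nonneg (pw_pos _ _).le hq0.le, pw_rpow, hs_q]
    have hf2p : ∀ w, f₂ w ^ p = K z w * (G w ^ p * ENNReal.ofReal (pw q⁻¹ w)) := by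
      intro w
      rw [hf₂def]
      rw [ENNReal.mul_rpow_of_nonneg _ _ hp0.le, ← ENNReal.rpow_mul,
        one_div_mul_cancel hp0.ne', ENNReal.rpow_one,
        ENNReal.mul_rpow_of_nonneg _ _ hp0.le,
        ENNReal.ofReal_rpow_of_nonneg (pw_pos _ _).le hp0.le, pw_rpow, hs_p]
    have hB : ∫⁻ w, f₁ w ^ q ∂μ ≤ ENNReal.ofReal I₁ * ENNReal.ofReal (pw (-p⁻¹) z) := by
      rw [show (fun w => f₁ w ^ q) = fun w => K z w * ENNReal.ofReal (pw (-p⁻¹) w) from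
        funext hf1q]
      exact schur_bound' hip0 hip1 hz
    have hT : ∫⁻ w, f₂ w ^ p ∂μ = T z := by
      rw [hTdef]
      exact lintegral_congr fun w => hf2p w
    rw [hgz]
    refine le_trans hHold ?_
    rw [hT]
    exact mul_le_mul_left (ENNReal.rpow_le_rpow hB (by positivity)) _
  -- raise to the power p
  have harith1 : (1/q) * p = p/q := by ring
  have harith2 : -p⁻¹ * (p/q) = -q⁻¹ := by field_simp
  have hkey : ∀ z : ℂ, 0 < z.im →
      (‖bergman F z‖₊ : ℝ≥0∞) ^ p
        ≤ (ENNReal.ofReal I₁) ^ (p/q) * (ENNReal.ofReal (pw (-q⁻¹) z) * T z) := by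
    intro z hz
    calc (‖bergman F z‖₊ : ℝ≥0∞) ^ p ≤ (g z) ^ p :=
          ENNReal.rpow_le_rpow (hptw z) hp0.le
      _ ≤ ((ENNReal.ofReal I₁ * ENNReal.ofReal (pw (-p⁻¹) z)) ^ (1/q) * (T z) ^ (1/p)) ^ p :=
          ENNReal.rpow_le_rpow (holder z hz) hp0.le
      _ = (ENNReal.ofReal I₁) ^ (p/q) * (ENNReal.ofReal (pw (-q⁻¹) z) * T z) := by
          rw [ENNReal.mul_rpow_of_nonneg _ _ hp0.le, ← ENNReal.rpow_mul, ← ENNReal.rpow_mul,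
            one_div_mul_cancel hp0.ne', ENNReal.rpow_one, harith1,
            ENNReal.mul_rpow_of_nonneg _ _ (by positivity : (0:ℝ) ≤ p/q),
            ENNReal.ofReal_rpow_of_nonneg (pw_pos _ _).le (by positivity : (0:ℝ) ≤ p/q),
            pw_rpow, harith2, mul_assoc]
  have main1 : ∫⁻ z in UHP, (‖bergman F z‖₊ : ℝ≥0∞) ^ p ∂volume
      ≤ (ENNReal.ofReal I₁) ^ (p/q)
        * ∫⁻ z in UHP, ENNReal.ofReal (pw (-q⁻¹) z) * T z ∂volume := by
    rw [← lintegral_const_mul' _ _ (ENNReal.rpow_ne_top_of_nonneg (by positivity)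
      ENNReal.ofReal_ne_top)]
    refine lintegral_mono_ae ?_
    filter_upwards [ae_restrict_mem measurableSet_UHP] with z hz
    exact hkey z hz
  -- Tonelli + second Schur bound
  have main2 : ∫⁻ z in UHP, ENNReal.ofReal (pw (-q⁻¹) z) * T z ∂volume
      ≤ ENNReal.ofReal I₂ * ∫⁻ w in UHP, G w ^ p ∂volume := by
    have expand : ∀ z : ℂ, ENNReal.ofReal (pw (-q⁻¹) z) * T z
        = ∫⁻ w in UHP, ENNReal.ofReal (pw (-q⁻¹) z)
            * (K z w * (G w ^ p * ENNReal.ofReal (pw q⁻¹ w))) ∂volume := by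
      intro z
      rw [hTdef]
      exact (lintegral_const_mul' _ _ ENNReal.ofReal_ne_top).symm
    have hswapmeas : AEMeasurable (fun pr : ℂ × ℂ => ENNReal.ofReal (pw (-q⁻¹) pr.1)
        * (K pr.1 pr.2 * (G pr.2 ^ p * ENNReal.ofReal (pw q⁻¹ pr.2)))) (μ.prod μ) := by
      refine Measurable.aemeasurable ?_
      exact (((measurable_pw _).comp measurable_fst).ennreal_ofReal).mul
        (measurable_K_pair.mul (((hG.comp measurable_snd).pow_const _).mul
          (((measurable_pw _).comp measurable_snd).ennreal_ofReal)))
    calc ∫⁻ z in UHP, ENNReal.ofReal (pw (-q⁻¹) z) * T z ∂volume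
        = ∫⁻ z in UHP, ∫⁻ w in UHP, ENNReal.ofReal (pw (-q⁻¹) z)
            * (K z w * (G w ^ p * ENNReal.ofReal (pw q⁻¹ w))) ∂volume ∂volume :=
          lintegral_congr expand
      _ = ∫⁻ w in UHP, ∫⁻ z in UHP, ENNReal.ofReal (pw (-q⁻¹) z)
            * (K z w * (G w ^ p * ENNReal.ofReal (pw q⁻¹ w))) ∂volume ∂volume :=
          lintegral_lintegral_swap hswapmeas
      _ = ∫⁻ w in UHP, (G w ^ p * ENNReal.ofReal (pw q⁻¹ w))
            * ∫⁻ z in UHP, K w z * ENNReal.ofReal (pw (-q⁻¹) z) ∂volume ∂volume := by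
          refine lintegral_congr fun w => ?_
          rw [← lintegral_const_mul (f := fun z => K w z * ENNReal.ofReal (pw (-q⁻¹) z))
            (G w ^ p * ENNReal.ofReal (pw q⁻¹ w))
            ((measurable_K_left w).mul (measurable_pw _).ennreal_ofReal)]
          refine lintegral_congr fun z => ?_
          rw [K_symm z w]
          ring
      _ ≤ ∫⁻ w in UHP, (G w ^ p * ENNReal.ofReal (pw q⁻¹ w))
            * (ENNReal.ofReal I₂ * ENNReal.ofReal (pw (-q⁻¹) w)) ∂volume := by
          refine lintegral_mono_ae ?_
          filter_upwards [ae_restrict_mem measurableSet_UHP] with w hw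
          exact mul_le_mul_right (schur_bound' hiq0 hiq1 hw) _
      _ = ∫⁻ w in UHP, ENNReal.ofReal I₂ * G w ^ p ∂volume := by
          refine lintegral_congr fun w => ?_
          have h2 : ENNReal.ofReal (pw q⁻¹ w) * ENNReal.ofReal (pw (-q⁻¹) w) = 1 := by
            rw [← ENNReal.ofReal_mul (pw_pos _ _).le, pw_mul_pw_neg, ENNReal.ofReal_one]
          calc (G w ^ p * ENNReal.ofReal (pw q⁻¹ w))
                * (ENNReal.ofReal I₂ * ENNReal.ofReal (pw (-q⁻¹) w))
              = ENNReal.ofReal I₂ * G w ^ p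
                * (ENNReal.ofReal (pw q⁻¹ w) * ENNReal.ofReal (pw (-q⁻¹) w)) := by ring
            _ = ENNReal.ofReal I₂ * G w ^ p := by rw [h2, mul_one]
      _ = ENNReal.ofReal I₂ * ∫⁻ w in UHP, G w ^ p ∂volume :=
          lintegral_const_mul' _ _ ENNReal.ofReal_ne_top
  -- put everything together
  have hGF : ∫⁻ w in UHP, G w ^ p ∂volume = ∫⁻ w in UHP, (‖F w‖₊ : ℝ≥0∞) ^ p ∂volume := by
    refine lintegral_congr_ae ?_
    filter_upwards [hAG] with w hw
    rw [hw]
  have htot : ∫⁻ z in UHP, (‖bergman F z‖₊ : ℝ≥0∞) ^ p ∂volume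
      ≤ (ENNReal.ofReal I₁) ^ (p/q) * (ENNReal.ofReal I₂
          * ∫⁻ w in UHP, (‖F w‖₊ : ℝ≥0∞) ^ p ∂volume) := by
    refine le_trans main1 ?_
    rw [← hGF]
    exact mul_le_mul_right main2 _
  have heLp1 : eLpNorm (bergman F) P μ
      = (∫⁻ z in UHP, (‖bergman F z‖₊ : ℝ≥0∞) ^ p ∂volume) ^ (1/p) := by
    simp only [eLpNorm_eq_lintegral_rpow_enorm_toReal hP0 hPtop, hPto, enorm_eq_nnnorm, hμdef]
  have heLp2 : eLpNorm F P μ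
      = (∫⁻ z in UHP, (‖F z‖₊ : ℝ≥0∞) ^ p ∂volume) ^ (1/p) := by
    simp only [eLpNorm_eq_lintegral_rpow_enorm_toReal hP0 hPtop, hPto, enorm_eq_nnnorm, hμdef]
  rw [heLp1, heLp2]
  calc (∫⁻ z in UHP, (‖bergman F z‖₊ : ℝ≥0∞) ^ p ∂volume) ^ (1/p)
      ≤ ((ENNReal.ofReal I₁) ^ (p/q) * (ENNReal.ofReal I₂
          * ∫⁻ w in UHP, (‖F w‖₊ : ℝ≥0∞) ^ p ∂volume)) ^ (1/p) :=
        ENNReal.rpow_le_rpow htot (by positivity)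
    _ = (ENNReal.ofReal I₁) ^ (1/q) * ((ENNReal.ofReal I₂) ^ (1/p)
          * (∫⁻ w in UHP, (‖F w‖₊ : ℝ≥0∞) ^ p ∂volume) ^ (1/p)) := by
        rw [ENNReal.mul_rpow_of_nonneg _ _ (by positivity : (0:ℝ) ≤ 1/p),
          ENNReal.mul_rpow_of_nonneg _ _ (by positivity : (0:ℝ) ≤ 1/p),
          ← ENNReal.rpow_mul]
        congr 2
        field_simp
    _ ≤ ENNReal.ofReal C * (∫⁻ w in UHP, (‖F w‖₊ : ℝ≥0∞) ^ p ∂volume) ^ (1/p) := by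
        rw [← mul_assoc]
        refine mul_le_mul_left ?_ _
        have h1 : ENNReal.ofReal I₁ ≤ ENNReal.ofReal C :=
          ENNReal.ofReal_le_ofReal (by rw [hCdef]; have := le_max_left I₁ I₂; linarith)
        have h2 : ENNReal.ofReal I₂ ≤ ENNReal.ofReal C :=
          ENNReal.ofReal_le_ofReal (by rw [hCdef]; have := le_max_right I₁ I₂; linarith)
        calc (ENNReal.ofReal I₁) ^ (1/q) * (ENNReal.ofReal I₂) ^ (1/p)
            ≤ (ENNReal.ofReal C) ^ (1/q) * (ENNReal.ofReal C) ^ (1/p) :=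
              mul_le_mul' (ENNReal.rpow_le_rpow h1 (by positivity))
                (ENNReal.rpow_le_rpow h2 (by positivity))
          _ = (ENNReal.ofReal C) ^ (1/q + 1/p) :=
              (ENNReal.rpow_add_of_nonneg _ _ (by positivity) (by positivity)).symm
          _ = ENNReal.ofReal C := by
              rw [show 1/q + 1/p = 1 by rw [one_div, one_div, add_comm]; exact hinv,
                ENNReal.rpow_one]
end
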